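/- arXiv:1911.01790 — 10 statements merged into one kernel-verified Lean document; each statement's English description precedes it below -/
import Mathlib

section
/- For all nonnegative integers n and all positive integers k, F(n, k-1) - F(n, k) = G(n+1, k) - G(n, k), where F and G are the rational-valued functions defined by F(n,k) = (-1)^n (3n-2k+1) C(2n,n) C(2n-2k,n-k) C(2n-2k,n) / 2^{3n-2k} and G(n,k) = (-1)^{n+1} n C(2n,n) C(2n-2k,n-k) C(2n-2k,n-1) / 2^{3n-2k}, with the convention that F(n,k) = G(n,k) = 0 whenever n < k. -/
/-!
For `n ≥ k` write `n = m + k`. Up to a sign, a power of `2` and a linear factor, each of the four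
terms is `C(2a,a) C(2b,b) C(2b,c)` with `a ∈ {n, n+1}`, `b ∈ {m, m+1}`, `c ∈ {n-1, n}`. The
recurrence `(a+1) C(2a+2,a+1) = 2(2a+1) C(2a,a)` removes `C(2n+2,n+1)` and `C(2m+2,m+1)`; what
remains is an identity between `C(2m+2,n)`, `C(2m,n)` and `C(2m,n-1)` that follows from Pascal's
rule and `C(N,r) (N+1) = C(N+1,r) (N+1-r)`. For `n < k` only `F(n,k-1)` and `G(n+1,k)` can be
nonzero, and they agree.
-/

/-- `F(n,k) = (-1)^n (3n-2k+1) C(2n,n) C(2n-2k,n-k) C(2n-2k,n) / 2^{3n-2k}`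
for `n ≥ k`, and `F(n,k) = 0` for `n < k`. -/
def F (n k : ℕ) : ℚ :=
  if n < k then 0 else
    (-1) ^ n * (3 * (n : ℚ) - 2 * (k : ℚ) + 1) * ((2 * n).choose n) *
      ((2 * n - 2 * k).choose (n - k)) * ((2 * n - 2 * k).choose n) / 2 ^ (3 * n - 2 * k)

/-- `G(n,k) = (-1)^{n+1} n C(2n,n) C(2n-2k,n-k) C(2n-2k,n-1) / 2^{3n-2k}`
for `n ≥ k`, and `G(n,k) = 0` for `n < k`. -/
def G (n k : ℕ) : ℚ :=
  if n < k then 0 else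
    (-1) ^ (n + 1) * (n : ℚ) * ((2 * n).choose n) *
      ((2 * n - 2 * k).choose (n - k)) * ((2 * n - 2 * k).choose (n - 1)) / 2 ^ (3 * n - 2 * k)

-- No truncated subtraction: when `n + 1 < k` both binomial coefficients vanish.
theorem Nat.cast_choose_mul_succ_eq {R : Type*} [CommRing R] (n k : ℕ) :
    (n.choose k : R) * (n + 1) = (n + 1).choose k * ((n : R) + 1 - k) := by
  rcases le_or_gt k (n + 1) with hk | hk
  · exact_mod_cast congrArg (Nat.cast (R := R)) (Nat.choose_mul_succ_eq n k)
  · simp [Nat.choose_eq_zero_of_lt hk, Nat.choose_eq_zero_of_lt (Nat.lt_of_succ_lt hk)]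

theorem centralBinom_succ_mul_choose_succ (m r : ℕ) :
    (2 * (m : ℚ) + 1 - r) * (m + 1).centralBinom * (2 * (m + 1)).choose (r + 1) =
      4 * m.centralBinom *
        ((2 * m + 2 + r) * (2 * m).choose (r + 1) + (r + 1) * (2 * m).choose r) := by
  have hcentral : ((m : ℚ) + 1) * (m + 1).centralBinom = 2 * (2 * m + 1) * m.centralBinom := by
    exact_mod_cast Nat.succ_mul_centralBinom_succ m
  have hpascal : ((2 * m + 1).choose (r + 1) : ℚ) = (2 * m).choose r + (2 * m).choose (r + 1) := by
    exact_mod_cast Nat.choose_succ_succ' (2 * m) r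
  have hrow₁ := Nat.cast_choose_mul_succ_eq (R := ℚ) (2 * m + 1) (r + 1)
  have hrow₀ := Nat.cast_choose_mul_succ_eq (R := ℚ) (2 * m) (r + 1)
  push_cast at hrow₁ hrow₀
  rw [show 2 * (m + 1) = 2 * m + 1 + 1 by ring]
  -- `hcentral` only determines `(m + 1) * C(2m+2, m+1)`, so multiply through by `m + 1` first.
  apply mul_left_cancel₀ (show (m : ℚ) + 1 ≠ 0 by positivity)
  linear_combination (2 * (m : ℚ) + 2) * ((2 * m + 1).choose (r + 1) : ℚ) * hcentral
    - ((m : ℚ) + 1) * (m + 1).centralBinom * hrow₁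
    + 4 * ((m : ℚ) + 1) * m.centralBinom * ((r + 1) * hpascal - hrow₀)

theorem F_of_lt {n k : ℕ} (h : n < k) : F n k = 0 := if_pos h

theorem G_of_lt {n k : ℕ} (h : n < k) : G n k = 0 := if_pos h

theorem F_of_eq_add {n m k : ℕ} (h : n = m + k) :
    F n k = (-1) ^ n * (3 * m + k + 1) * n.centralBinom * m.centralBinom * (2 * m).choose n /
      2 ^ (3 * m + k) := by
  subst h
  rw [F, if_neg (by omega), show 2 * (m + k) - 2 * k = 2 * m by omega, Nat.add_sub_cancel,
    show 3 * (m + k) - 2 * k = 3 * m + k by omega, Nat.centralBinom_eq_two_mul_choose,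
    Nat.centralBinom_eq_two_mul_choose]
  push_cast
  ring

theorem G_of_eq_add {n m k : ℕ} (h : n = m + k) :
    G n k = (-1) ^ (n + 1) * n * n.centralBinom * m.centralBinom * (2 * m).choose (n - 1) /
      2 ^ (3 * m + k) := by
  subst h
  rw [G, if_neg (by omega), show 2 * (m + k) - 2 * k = 2 * m by omega, Nat.add_sub_cancel,
    show 3 * (m + k) - 2 * k = 3 * m + k by omega]
  rfl

theorem F_eq_G_succ_succ {n k : ℕ} (h : n ≤ k) : F n k = G (n + 1) (k + 1) := by
  rcases h.lt_or_eq with h | rfl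
  · rw [F_of_lt h, G_of_lt (by omega)]
  · cases n <;> simp [F, G]

/-- The WZ-pair relation: for all `n ≥ 0` and `k ≥ 1`,
`F(n,k-1) - F(n,k) = G(n+1,k) - G(n,k)`. -/
theorem wz_pair_relation (n k : ℕ) (hk : 0 < k) :
    F n (k - 1) - F n k = G (n + 1) k - G n k := by
  obtain ⟨j, rfl⟩ : ∃ j, k = j + 1 := ⟨k - 1, by omega⟩
  rw [Nat.add_sub_cancel]
  rcases le_or_gt n j with hn | hn
  · rw [F_eq_G_succ_succ hn, F_of_lt (n := n) (by omega), G_of_lt (n := n) (by omega)]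
  obtain ⟨m, rfl⟩ : ∃ m, n = m + j + 1 := ⟨n - j - 1, by omega⟩
  rw [F_of_eq_add (m := m + 1) (by omega), F_of_eq_add (m := m) (by omega),
    G_of_eq_add (m := m + 1) (by omega), G_of_eq_add (m := m) (by omega)]
  have hcentral := congrArg (Nat.cast (R := ℚ)) (Nat.succ_mul_centralBinom_succ (m + j + 1))
  have hkey := centralBinom_succ_mul_choose_succ m (m + j)
  simp only [Nat.add_sub_cancel]
  push_cast at hcentral hkey ⊢
  linear_combination ((-1) ^ (m + j + 1) / 2 ^ (3 * m + j + 4) : ℚ) *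
    (2 * (m + j + 1).centralBinom * hkey
      - (m + 1).centralBinom * (2 * (m + 1)).choose (m + j + 1) * hcentral)
end

section
/- Let p > 3 be a prime and r > 0 an integer. Then G(p^r, (p^r+1)/2) = p^r * C(2p^r, p^r) * C(p^r - 1, (p^r-1)/2) / 2^{2p^r - 1} ≡ (-1)^{(p^r-1)/2} * p^r (mod p^{r+2}), where the congruence is between rational numbers whose denominators are coprime to p. -/
open Finset

section Ultrametric

variable {R ι : Type*} [NormedCommRing R] [NormOneClass R] [IsUltrametricDist R]
  {s : Finset ι} {f : ι → R} {ε : ℝ}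

theorem norm_two_mul_le (x : R) : ‖2 * x‖ ≤ ‖x‖ :=
  (norm_mul_le _ _).trans <| mul_le_of_le_one_left (norm_nonneg x) <| by
    simpa using IsUltrametricDist.norm_natCast_le_one R 2

theorem norm_prod_one_add_sub_one_le (hε : 0 ≤ ε) (hε1 : ε ≤ 1) (hf : ∀ i ∈ s, ‖f i‖ ≤ ε) :
    ‖∏ i ∈ s, (1 + f i) - 1‖ ≤ ε := by
  classical
  induction s using Finset.induction with
  | empty => simpa using hε
  | insert a s ha ih =>
    have hfa := hf a (mem_insert_self a s)
    have hP := ih fun i hi => hf i (mem_insert_of_mem hi)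
    have h1fa : ‖1 + f a‖ ≤ 1 :=
      (IsUltrametricDist.norm_add_le_max _ _).trans (max_le norm_one.le (hfa.trans hε1))
    rw [prod_insert ha, show (1 + f a) * ∏ i ∈ s, (1 + f i) - 1
      = (1 + f a) * (∏ i ∈ s, (1 + f i) - 1) + f a by ring]
    refine (IsUltrametricDist.norm_add_le_max _ _).trans (max_le ?_ hfa)
    calc ‖(1 + f a) * (∏ i ∈ s, (1 + f i) - 1)‖ ≤ 1 * ε :=
          (norm_mul_le _ _).trans (mul_le_mul h1fa hP (norm_nonneg _) zero_le_one)
      _ = ε := one_mul ε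

theorem norm_prod_one_add_sub_one_add_sum_le (hε : 0 ≤ ε) (hε1 : ε ≤ 1)
    (hf : ∀ i ∈ s, ‖f i‖ ≤ ε) :
    ‖∏ i ∈ s, (1 + f i) - (1 + ∑ i ∈ s, f i)‖ ≤ ε ^ 2 := by
  classical
  induction s using Finset.induction with
  | empty => simpa using sq_nonneg ε
  | insert a s ha ih =>
    have hf' : ∀ i ∈ s, ‖f i‖ ≤ ε := fun i hi => hf i (mem_insert_of_mem hi)
    have hfa := hf a (mem_insert_self a s)
    rw [prod_insert ha, sum_insert ha,
      show (1 + f a) * ∏ i ∈ s, (1 + f i) - (1 + (f a + ∑ i ∈ s, f i))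
        = (∏ i ∈ s, (1 + f i) - (1 + ∑ i ∈ s, f i)) + f a * (∏ i ∈ s, (1 + f i) - 1) by ring]
    refine (IsUltrametricDist.norm_add_le_max _ _).trans (max_le (ih hf') ?_)
    rw [sq]
    exact (norm_mul_le _ _).trans
      (mul_le_mul hfa (norm_prod_one_add_sub_one_le hε hε1 hf') (norm_nonneg _) hε)

end Ultrametric

section BinomialProducts

variable {K : Type*} [Field K] [CharZero K]

theorem Nat.cast_add_choose_eq_prod (a k : ℕ) :
    ((a + k).choose k : K) = ∏ j ∈ range k, (1 + a / (j + 1 : K)) := by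
  induction k with
  | zero => simp
  | succ k ih =>
    have h : ((a + k + 1) * (a + k).choose k : K) = (a + k + 1).choose (k + 1) * (k + 1) := by
      exact_mod_cast Nat.add_one_mul_choose_eq (a + k) k
    rw [prod_range_succ, ← ih, ← add_assoc]
    have hk : (k + 1 : K) ≠ 0 := Nat.cast_add_one_ne_zero k
    field_simp
    linear_combination -h

theorem Nat.cast_choose_eq_neg_one_pow_mul_prod (N k : ℕ) :
    (N.choose k : K) = (-1) ^ k * ∏ j ∈ range k, (1 - (N + 1) / (j + 1 : K)) := by
  induction k with
  | zero => simp
  | succ k ih =>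
    have h : (N.choose (k + 1) : K) * (k + 1) = N.choose k * (N - k) := by
      rcases le_or_gt k N with hk | hk
      · have h := congrArg (Nat.cast : ℕ → K) (Nat.choose_succ_right_eq N k)
        push_cast [Nat.cast_sub hk] at h
        exact h
      · simp [Nat.choose_eq_zero_of_lt hk, Nat.choose_eq_zero_of_lt (hk.trans (Nat.lt_succ_self k))]
    rw [prod_range_succ, pow_succ, mul_mul_mul_comm, ← ih]
    have hk : (k + 1 : K) ≠ 0 := Nat.cast_add_one_ne_zero k
    field_simp
    linear_combination h

theorem sum_range_two_mul_neg_one_pow_mul_div (x : K) (m : ℕ) :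
    ∑ j ∈ range (2 * m), (-1 : K) ^ j * (x / (j + 1))
      = ∑ j ∈ range (2 * m), x / (j + 1) - ∑ j ∈ range m, x / (j + 1) := by
  induction m with
  | zero => simp
  | succ m ih =>
    rw [show 2 * (m + 1) = 2 * m + 1 + 1 by ring]
    have heven : (-1 : K) ^ (2 * m) = 1 := (even_two_mul m).neg_one_pow
    simp only [sum_range_succ, ih, pow_succ, heven]
    have h1 : (2 * m + 1 : K) ≠ 0 := by exact_mod_cast Nat.succ_ne_zero (2 * m)
    have h2 : (m + 1 : K) ≠ 0 := Nat.cast_add_one_ne_zero m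
    push_cast
    have h3 : (2 * m + 1 + 1 : K) = 2 * (m + 1) := by ring
    rw [h3]
    field_simp
    ring

end BinomialProducts

namespace Padic

variable {p : ℕ} [hp : Fact p.Prime]

theorem norm_prime_pow_div_natCast_le {r k : ℕ} (hk : 0 < k) (hkr : k < p ^ r) :
    ‖(p : ℚ_[p]) ^ r / k‖ ≤ (p : ℝ)⁻¹ := by
  have hp0 : (0 : ℝ) < p := by exact_mod_cast hp.out.pos
  have hndvd : ¬ (p : ℤ) ^ r ∣ k := fun h =>
    (Int.le_of_dvd (by exact_mod_cast hk) h).not_gt (by exact_mod_cast hkr)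
  have hk_norm : (p : ℝ) ^ (-r + 1 : ℤ) ≤ ‖(k : ℚ_[p])‖ := by
    rw [← not_lt, ← norm_le_pow_iff_norm_lt_pow_add_one]
    exact fun h => hndvd ((norm_int_le_pow_iff_dvd k r).1 (by exact_mod_cast h))
  rw [norm_div, norm_p_pow, div_le_iff₀ ((zpow_pos hp0 _).trans_le hk_norm)]
  calc (p : ℝ) ^ (-r : ℤ) = (p : ℝ)⁻¹ * p ^ (-r + 1 : ℤ) := by
        rw [zpow_add_one₀ hp0.ne']; field_simp
    _ ≤ (p : ℝ)⁻¹ * ‖(k : ℚ_[p])‖ := by gcongr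

variable {m : ℕ} (hx : ∀ j < 2 * m, ‖(2 * m + 1 : ℚ_[p]) / (j + 1)‖ ≤ (p : ℝ)⁻¹)
include hx

theorem norm_choose_succ_sub_le {j : ℕ} (hj : j < 2 * m) :
    ‖((2 * m + 1).choose (j + 1) : ℚ_[p]) - (-1) ^ j * ((2 * m + 1) / (j + 1))‖
      ≤ (p : ℝ)⁻¹ ^ 2 := by
  have hε : (0 : ℝ) ≤ (p : ℝ)⁻¹ := by positivity
  have hε1 : (p : ℝ)⁻¹ ≤ 1 := inv_le_one_of_one_le₀ (by exact_mod_cast hp.out.one_le)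
  have hchoose : ((2 * m + 1).choose (j + 1) : ℚ_[p])
      = (2 * m + 1) / (j + 1) *
          ((-1) ^ j * ∏ i ∈ range j, (1 + -((2 * m + 1 : ℚ_[p]) / (i + 1)))) := by
    have h : ((2 * m + 1) * (2 * m).choose j : ℚ_[p]) = (2 * m + 1).choose (j + 1) * (j + 1) := by
      exact_mod_cast Nat.add_one_mul_choose_eq (2 * m) j
    have hj1 : (j + 1 : ℚ_[p]) ≠ 0 := Nat.cast_add_one_ne_zero j
    simp only [← sub_eq_add_neg]
    have hC := Nat.cast_choose_eq_neg_one_pow_mul_prod (K := ℚ_[p]) (2 * m) j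
    push_cast at hC
    rw [← hC]
    field_simp
    linear_combination -h
  have hprod := norm_prod_one_add_sub_one_le (s := range j)
    (f := fun i => -((2 * m + 1 : ℚ_[p]) / (i + 1))) hε hε1 fun i hi => by
    rw [norm_neg]; exact hx i ((mem_range.1 hi).trans hj)
  rw [hchoose, show ∀ a b c : ℚ_[p], a * (b * c) - b * a = b * (a * (c - 1)) by intros; ring,
    norm_mul, norm_pow, norm_neg, norm_one, one_pow, one_mul, sq]
  exact (norm_mul_le _ _).trans (mul_le_mul (hx j hj) hprod (norm_nonneg _) hε)

theorem norm_sum_neg_one_pow_mul_sub_le :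
    ‖∑ j ∈ range (2 * m), (-1) ^ j * ((2 * m + 1 : ℚ_[p]) / (j + 1)) - (2 ^ (2 * m + 1) - 2)‖
      ≤ (p : ℝ)⁻¹ ^ 2 := by
  have hsum : ∑ j ∈ range (2 * m), ((2 * m + 1).choose (j + 1) : ℚ_[p]) = 2 ^ (2 * m + 1) - 2 := by
    have h := Nat.sum_range_choose (2 * m + 1)
    rw [sum_range_succ, sum_range_succ', Nat.choose_self, Nat.choose_zero_right] at h
    have h' := congrArg (Nat.cast : ℕ → ℚ_[p]) h
    push_cast at h'
    linear_combination h'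
  rw [norm_sub_rev, ← hsum, ← sum_sub_distrib]
  exact IsUltrametricDist.norm_sum_le_of_forall_le_of_nonneg (by positivity)
    fun j hj => norm_choose_succ_sub_le hx (mem_range.1 hj)

theorem norm_neg_one_pow_mul_choose_mul_choose_sub_le :
    ‖(-1) ^ m * ((4 * m + 2).choose (2 * m + 1) * (2 * m).choose m : ℚ_[p])
      - 2 * (1 + ∑ j ∈ range (2 * m), (-1) ^ j * ((2 * m + 1 : ℚ_[p]) / (j + 1)))‖
      ≤ (p : ℝ)⁻¹ ^ 2 := by
  set x : ℕ → ℚ_[p] := fun j => (2 * m + 1) / (j + 1) with hx_def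
  set g : ℕ ⊕ ℕ → ℚ_[p] := Sum.elim x fun j => -x j
  have hcentral :
      ((4 * m + 2).choose (2 * m + 1) : ℚ_[p]) = 2 * ∏ j ∈ range (2 * m), (1 + x j) := by
    have h : (4 * m + 2).choose (2 * m + 1) = 2 * (2 * m + 1 + 2 * m).choose (2 * m) := by
      rw [show 4 * m + 2 = 2 * (2 * m) + 1 + 1 by ring, Nat.choose_succ_succ, Nat.choose_symm_half,
        show 2 * m + 1 + 2 * m = 2 * (2 * m) + 1 by ring]
      ring
    rw [h, Nat.cast_mul, Nat.cast_add_choose_eq_prod]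
    push_cast
    rfl
  have hmiddle : (-1) ^ m * ((2 * m).choose m : ℚ_[p]) = ∏ j ∈ range m, (1 + -x j) := by
    rw [Nat.cast_choose_eq_neg_one_pow_mul_prod, ← mul_assoc, ← mul_pow, neg_one_mul, neg_neg,
      one_pow, one_mul]
    push_cast
    simp only [sub_eq_add_neg, hx_def]
  have halt : ∑ j ∈ range (2 * m), (-1) ^ j * x j
      = ∑ j ∈ range (2 * m), x j + ∑ j ∈ range m, -x j := by
    rw [sum_range_two_mul_neg_one_pow_mul_div, sum_neg_distrib, sub_eq_add_neg]
  have hg : ∀ i ∈ (range (2 * m)).disjSum (range m), ‖g i‖ ≤ (p : ℝ)⁻¹ := by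
    rintro (j | j) hj <;> simp only [inl_mem_disjSum, inr_mem_disjSum, mem_range] at hj
    · exact hx j hj
    · simpa only [g, Sum.elim_inr, norm_neg] using hx j (by omega)
  have hε1 : (p : ℝ)⁻¹ ≤ 1 := inv_le_one_of_one_le₀ (by exact_mod_cast hp.out.one_le)
  have hprod : (∏ j ∈ range (2 * m), (1 + x j)) * ∏ j ∈ range m, (1 + -x j)
      = ∏ i ∈ (range (2 * m)).disjSum (range m), (1 + g i) := by
    rw [prod_disjSum]; rfl
  have hsum : ∑ j ∈ range (2 * m), x j + ∑ j ∈ range m, -x j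
      = ∑ i ∈ (range (2 * m)).disjSum (range m), g i := by
    rw [sum_disjSum]; rfl
  rw [mul_left_comm, hcentral, hmiddle, halt, mul_assoc, ← mul_sub, hprod, hsum]
  exact (norm_two_mul_le _).trans (norm_prod_one_add_sub_one_add_sum_le (by positivity) hε1 hg)

theorem norm_neg_one_pow_mul_choose_mul_choose_sub_two_pow_le :
    ‖(-1) ^ m * ((4 * m + 2).choose (2 * m + 1) * (2 * m).choose m : ℚ_[p])
      - (2 ^ (2 * m + 2) - 2)‖ ≤ (p : ℝ)⁻¹ ^ 2 := by
  rw [show ∀ a s : ℚ_[p], a - (2 ^ (2 * m + 2) - 2)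
      = (a - 2 * (1 + s)) + 2 * (s - (2 ^ (2 * m + 1) - 2)) from fun a s => by ring]
  exact (IsUltrametricDist.norm_add_le_max _ _).trans <|
    max_le (norm_neg_one_pow_mul_choose_mul_choose_sub_le hx)
      ((norm_two_mul_le _).trans (norm_sum_neg_one_pow_mul_sub_le hx))

end Padic

theorem sq_dvd_neg_one_pow_mul_choose_mul_choose_sub {p r m : ℕ} [Fact p.Prime]
    (hm : p ^ r = 2 * m + 1) :
    (p : ℤ) ^ 2 ∣ (-1) ^ m * ((4 * m + 2).choose (2 * m + 1) * (2 * m).choose m)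
      - (2 ^ (2 * m + 2) - 2) := by
  have hx : ∀ j < 2 * m, ‖(2 * m + 1 : ℚ_[p]) / (j + 1)‖ ≤ (p : ℝ)⁻¹ := fun j hj => by
    have h := Padic.norm_prime_pow_div_natCast_le (p := p) (r := r) (Nat.succ_pos j) (by omega)
    rwa [← Nat.cast_pow, hm, Nat.cast_succ, Nat.cast_succ, Nat.cast_mul, Nat.cast_two] at h
  rw [← Padic.norm_int_le_pow_iff_dvd, zpow_neg, zpow_natCast, ← inv_pow]
  push_cast
  exact Padic.norm_neg_one_pow_mul_choose_mul_choose_sub_two_pow_le hx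

theorem Int.ModEq.pow_prime_pow_sub_one_eq_one {p : ℕ} (hp : p.Prime) {a : ℤ} (ha : IsCoprime a p)
    (r : ℕ) : a ^ (p ^ r - 1) ≡ 1 [ZMOD p] := by
  obtain ⟨k, hk⟩ := Nat.sub_one_dvd_pow_sub_one p r
  rw [hk, pow_mul]
  simpa using (Int.ModEq.pow_card_sub_one_eq_one hp ha).pow k

theorem sq_dvd_choose_mul_choose_sub {p r m : ℕ} (hp : p.Prime) (hp2 : p ≠ 2)
    (hm : p ^ r = 2 * m + 1) :
    (p : ℤ) ^ 2 ∣
      (4 * m + 2).choose (2 * m + 1) * (2 * m).choose m - (-1) ^ m * 2 ^ (4 * m + 1) := by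
  have := Fact.mk hp
  have hfermat : (p : ℤ) ∣ 2 ^ (2 * m) - 1 := by
    have h2 : IsCoprime (2 : ℤ) p := by
      exact_mod_cast Nat.isCoprime_iff_coprime.2 ((Nat.coprime_primes Nat.prime_two hp).2 hp2.symm)
    have := (Int.ModEq.pow_prime_pow_sub_one_eq_one hp h2 r).symm.dvd
    rwa [hm, Nat.add_sub_cancel] at this
  have hsign : ((-1 : ℤ) ^ m) ^ 2 = 1 := by rw [← pow_mul, pow_mul', neg_one_sq, one_pow]
  have key : ((4 * m + 2).choose (2 * m + 1) * (2 * m).choose m - (-1) ^ m * 2 ^ (4 * m + 1) : ℤ)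
      = (-1) ^ m * (((-1) ^ m * ((4 * m + 2).choose (2 * m + 1) * (2 * m).choose m)
          - (2 ^ (2 * m + 2) - 2)) - 2 * (2 ^ (2 * m) - 1) ^ 2) := by
    linear_combination (-((4 * m + 2).choose (2 * m + 1) * (2 * m).choose m : ℤ)) * hsign
  rw [key]
  exact dvd_mul_of_dvd_right (dvd_sub (sq_dvd_neg_one_pow_mul_choose_mul_choose_sub hm)
    (dvd_mul_of_dvd_right (pow_dvd_pow_of_dvd hfermat 2) 2)) _

theorem Rat.dvd_num_div_of_dvd {d a b : ℤ} (hb : IsCoprime d b) (h : d ∣ a) :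
    d ∣ ((a : ℚ) / b).num := by
  set q : ℚ := a / b
  rcases eq_or_ne b 0 with rfl | hb0
  · simp [q]
  have hq : q.num * b = a * q.den := by
    have : (q.num : ℚ) * b = a * q.den := by
      rw [← Rat.mul_den_eq_num, mul_right_comm, div_mul_cancel₀ _ (by exact_mod_cast hb0)]
    exact_mod_cast this
  exact hb.dvd_of_dvd_mul_right (hq ▸ h.mul_right _)

theorem G_two_mul_add_one_succ (m : ℕ) :
    G (2 * m + 1) (m + 1)
      = (2 * m + 1) * (4 * m + 2).choose (2 * m + 1) * (2 * m).choose m / 2 ^ (4 * m + 1) := by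
  rw [G, if_neg (by omega), show 2 * (2 * m + 1) - 2 * (m + 1) = 2 * m by omega,
    show 2 * m + 1 - (m + 1) = m by omega, Nat.add_sub_cancel, Nat.choose_self,
    show 3 * (2 * m + 1) - 2 * (m + 1) = 4 * m + 1 by omega,
    show 2 * (2 * m + 1) = 4 * m + 2 by ring, Even.neg_one_pow ⟨m + 1, by ring⟩]
  push_cast
  ring

theorem G_prime_pow_half_congr_general (p r : ℕ) (hp : p.Prime) (hp3 : 3 < p) :
    G (p ^ r) ((p ^ r + 1) / 2) =
        (p : ℚ) ^ r * ((2 * p ^ r).choose (p ^ r) : ℚ) *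
          ((p ^ r - 1).choose ((p ^ r - 1) / 2) : ℚ) / 2 ^ (2 * p ^ r - 1) ∧
      ((p : ℤ)) ^ (r + 2) ∣
        ((p : ℚ) ^ r * ((2 * p ^ r).choose (p ^ r) : ℚ) *
            ((p ^ r - 1).choose ((p ^ r - 1) / 2) : ℚ) / 2 ^ (2 * p ^ r - 1) -
          (-1) ^ ((p ^ r - 1) / 2) * (p : ℚ) ^ r).num := by
  obtain ⟨m, hm⟩ : Odd (p ^ r) := (hp.odd_of_ne_two (by omega)).pow
  have hpr : (p : ℚ) ^ r = 2 * m + 1 := by exact_mod_cast hm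
  rw [hm, hpr, show (2 * m + 1 + 1) / 2 = m + 1 by omega, Nat.add_sub_cancel,
    show 2 * (2 * m + 1) = 4 * m + 2 by ring, show 4 * m + 2 - 1 = 4 * m + 1 by omega,
    Nat.mul_div_cancel_left m two_pos, G_two_mul_add_one_succ]
  refine ⟨rfl, ?_⟩
  have hcop : IsCoprime ((p : ℤ) ^ (r + 2)) (2 ^ (4 * m + 1)) := by
    exact_mod_cast Nat.isCoprime_iff_coprime.2
      (Nat.Coprime.pow _ _ ((Nat.coprime_primes hp Nat.prime_two).2 (by omega)))
  convert Rat.dvd_num_div_of_dvd hcop (pow_add (p : ℤ) r 2 ▸ mul_dvd_mul_left ((p : ℤ) ^ r)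
    (sq_dvd_choose_mul_choose_sub hp (by omega) hm)) using 2
  push_cast
  rw [← hpr]
  field_simp

/-- Lemma 3.2 (Mao): for any prime `p > 3` and integer `r > 0`,
`G(p^r, (p^r+1)/2) = p^r C(2p^r, p^r) C(p^r-1, (p^r-1)/2) / 2^{2p^r-1}`, and this
quantity is `≡ (-1)^{(p^r-1)/2} p^r (mod p^{r+2})`. -/
theorem G_prime_pow_half_congr (p r : ℕ) (hp : p.Prime) (hp3 : 3 < p) (hr : 0 < r) :
    G (p ^ r) ((p ^ r + 1) / 2) =
        (p : ℚ) ^ r * ((2 * p ^ r).choose (p ^ r) : ℚ) *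
          ((p ^ r - 1).choose ((p ^ r - 1) / 2) : ℚ) / 2 ^ (2 * p ^ r - 1) ∧
      ((p : ℤ)) ^ (r + 2) ∣
        ((p : ℚ) ^ r * ((2 * p ^ r).choose (p ^ r) : ℚ) *
            ((p ^ r - 1).choose ((p ^ r - 1) / 2) : ℚ) / 2 ^ (2 * p ^ r - 1) -
          (-1) ^ ((p ^ r - 1) / 2) * (p : ℚ) ^ r).num :=
  G_prime_pow_half_congr_general p r hp hp3
end

section
/- Let p > 3 be a prime and r > 0 an integer. Then sum_{k=1}^{(p^r-1)/2} G(p^r, k) ≡ 0 (mod p^{r+2}), where G(n,k) = (-1)^{n+1} n C(2n,n) C(2n-2k,n-k) C(2n-2k,n-1) / 2^{3n-2k}, and the congruence is between rational numbers whose denominators are coprime to p. -/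
-- Kummer's theorem: a carry in digit position `i` when adding `a` and `b` in base `p`.
theorem Nat.Prime.dvd_add_choose_of_le_mod_add_mod {p a b i : ℕ} (hp : p.Prime)
    (hcarry : p ^ i ≤ b % p ^ i + a % p ^ i) : p ∣ (a + b).choose b := by
  have := Fact.mk hp
  have hi : 1 ≤ i := Nat.one_le_iff_ne_zero.mpr (by rintro rfl; simp [Nat.mod_one] at hcarry)
  have hia : p ^ i ≤ a + b :=
    hcarry.trans (Nat.add_comm a b ▸ Nat.add_le_add (Nat.mod_le b _) (Nat.mod_le a _))
  have hab : a + b ≠ 0 := by have := Nat.one_le_pow i p hp.pos; omega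
  have hlog : i < Nat.log p (a + b) + 1 :=
    Nat.lt_succ_of_le ((Nat.le_log_iff_pow_le hp.one_lt hab).mpr hia)
  refine dvd_of_one_le_padicValNat ?_
  rw [padicValNat_choose' (Nat.lt_succ_self _)]
  exact Finset.card_pos.mpr ⟨i, Finset.mem_filter.mpr ⟨Finset.mem_Ico.mpr ⟨hi, hlog⟩, hcarry⟩⟩

theorem Nat.Prime.dvd_centralBinom_of_lt_pow_of_pow_le {p i m : ℕ} (hp : p.Prime)
    (hm : m < p ^ i) (hpm : p ^ i ≤ 2 * m) : p ∣ m.centralBinom := by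
  rw [Nat.centralBinom_eq_two_mul_choose, two_mul]
  refine hp.dvd_add_choose_of_le_mod_add_mod (i := i) ?_
  rw [Nat.mod_eq_of_lt hm]
  omega

theorem Nat.Prime.dvd_pow_sub_one_add_choose {p i b : ℕ} (hp : p.Prime) (hb0 : 0 < b)
    (hb : b < p ^ i) : p ∣ (p ^ i - 1 + b).choose b := by
  have hid : (p ^ i - 1 + b).choose b * b = (p ^ i - 1 + b).choose (b - 1) * p ^ i := by
    have := Nat.choose_succ_right_eq (p ^ i - 1 + b) (b - 1)
    rwa [Nat.sub_add_cancel hb0, show p ^ i - 1 + b - (b - 1) = p ^ i by omega] at this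
  by_contra hndvd
  have hcop : (p ^ i).Coprime ((p ^ i - 1 + b).choose b) :=
    ((hp.coprime_iff_not_dvd).mpr hndvd).pow_left i
  have : p ^ i ∣ b := hcop.dvd_of_dvd_mul_left ⟨_, hid.trans (mul_comm _ _)⟩
  exact absurd (Nat.le_of_dvd hb0 this) (by omega)

theorem Rat.dvd_num_intCast_div {a M d : ℤ} (hd : IsCoprime a d) (ha : a ∣ M) :
    a ∣ ((M : ℚ) / d).num := by
  rcases eq_or_ne d 0 with rfl | hd0
  · simp
  set q : ℚ := M / d
  have hnum : q.num * d = M * q.den := by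
    have : (q.num : ℚ) * d = M * q.den := by
      rw [← Rat.mul_den_eq_num, show q = M / d from rfl]
      field_simp
    exact_mod_cast this
  exact hd.dvd_of_dvd_mul_right (hnum ▸ ha.mul_right _)

def GNumerator (n k : ℕ) : ℕ :=
  n * (2 * n).choose n * (2 * n - 2 * k).choose (n - k) * (2 * n - 2 * k).choose (n - 1) *
    2 ^ (2 * k - 2)

theorem G_eq_GNumerator_div {n k : ℕ} (hn : Odd n) (hk0 : 1 ≤ k) (hkn : k ≤ n) :
    G n k = GNumerator n k / 2 ^ (3 * n - 2) := by
  rw [G, if_neg (by omega), hn.add_one.neg_one_pow, one_mul,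
    show 3 * n - 2 = (3 * n - 2 * k) + (2 * k - 2) by omega, pow_add, GNumerator]
  push_cast
  rw [mul_div_mul_right _ _ (by positivity)]

theorem pow_add_two_dvd_GNumerator {p r k : ℕ} (hp : p.Prime) (hk0 : 1 ≤ k)
    (hk : 2 * k < p ^ r) : p ^ (r + 2) ∣ GNumerator (p ^ r) k := by
  set n := p ^ r
  have hcentral : p ∣ (2 * n - 2 * k).choose (n - k) := by
    rw [show 2 * n - 2 * k = 2 * (n - k) by omega, ← Nat.centralBinom_eq_two_mul_choose]
    exact hp.dvd_centralBinom_of_lt_pow_of_pow_le (i := r) (by omega) (by omega)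
  have hsecond : p ∣ (2 * n - 2 * k).choose (n - 1) := by
    rw [show 2 * n - 2 * k = n - 1 + (n + 1 - 2 * k) by omega, Nat.choose_symm_add]
    exact hp.dvd_pow_sub_one_add_choose (by omega) (by omega)
  rw [pow_add, sq, ← mul_assoc]
  exact Dvd.dvd.mul_right (mul_dvd_mul (mul_dvd_mul (dvd_mul_right _ _) hcentral) hsecond) _

theorem sum_G_prime_pow_congr_zero_general (p r : ℕ) (hp : p.Prime) (hp3 : 3 < p) :
    ((p : ℤ)) ^ (r + 2) ∣ (∑ k ∈ Finset.Icc 1 ((p ^ r - 1) / 2), G (p ^ r) k).num := by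
  have hodd : Odd (p ^ r) := (hp.odd_of_ne_two (by omega)).pow
  have hterm : ∀ k ∈ Finset.Icc 1 ((p ^ r - 1) / 2),
      G (p ^ r) k = GNumerator (p ^ r) k / 2 ^ (3 * p ^ r - 2) := fun k hk =>
    G_eq_GNumerator_div hodd (Finset.mem_Icc.mp hk).1 (by grind)
  rw [Finset.sum_congr rfl hterm, ← Finset.sum_div]
  have hcop : IsCoprime ((p : ℤ) ^ (r + 2)) (2 ^ (3 * p ^ r - 2)) := by
    refine IsCoprime.pow (Int.isCoprime_iff_gcd_eq_one.mpr ?_)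
    exact_mod_cast (Nat.coprime_primes hp Nat.prime_two).mpr (by omega)
  have hdvd :
      (p : ℤ) ^ (r + 2) ∣ ∑ k ∈ Finset.Icc 1 ((p ^ r - 1) / 2), (GNumerator (p ^ r) k : ℤ) :=
    Finset.dvd_sum fun k hk => by
      have hk := Finset.mem_Icc.mp hk
      exact_mod_cast pow_add_two_dvd_GNumerator hp hk.1 (by omega)
  simpa using Rat.dvd_num_intCast_div hcop hdvd

/-- Lemma 3.3 (Mao): for any prime `p > 3` and integer `r > 0`,
`∑_{k=1}^{(p^r-1)/2} G(p^r, k) ≡ 0 (mod p^{r+2})`. -/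
theorem sum_G_prime_pow_congr_zero (p r : ℕ) (hp : p.Prime) (hp3 : 3 < p) (hr : 0 < r) :
    ((p : ℤ)) ^ (r + 2) ∣ (∑ k ∈ Finset.Icc 1 ((p ^ r - 1) / 2), G (p ^ r) k).num :=
  sum_G_prime_pow_congr_zero_general p r hp hp3
end

section
/- For every nonnegative integer n, sum_{k=0}^{n} C(2n, k) * C(2n-k, k) / 4^k = C(4n, 2n) / 4^n, as an identity of rational numbers. -/
/-! Comparing coefficients of `X ^ m` in `(X + 1) ^ (2 * m) = (X * (X + 2) + 1) ^ m` gives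
`∑ k, C(m, k) C(m - k, k) 2 ^ (m - 2k) = C(2m, m)`. For `m = 2n` only `k ≤ n` contribute, and
dividing by `4 ^ n` turns `2 ^ (2n - 2k)` into `4 ^ (-k)`. -/

open Polynomial Finset

theorem coeff_X_pow_mul_X_add_C_pow {R : Type*} [CommSemiring R] (r : R) {j m : ℕ}
    (h : j ≤ m) : (X ^ j * (X + C r) ^ j).coeff m = r ^ (2 * j - m) * j.choose (m - j) := by
  obtain ⟨i, rfl⟩ := Nat.exists_eq_add_of_le h
  rw [add_comm j i, coeff_X_pow_mul, coeff_X_add_C_pow, Nat.add_sub_cancel]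
  congr 2
  omega

theorem sum_choose_mul_choose_sub_mul_two_pow (m : ℕ) :
    ∑ k ∈ range (m + 1), m.choose k * (m - k).choose k * 2 ^ (m - 2 * k) =
      (2 * m).choose m := by
  have hsq : (X + 1 : ℕ[X]) ^ (2 * m) = (X * (X + C 2) + 1) ^ m := by
    rw [pow_mul, C_ofNat]
    ring
  calc ∑ k ∈ range (m + 1), m.choose k * (m - k).choose k * 2 ^ (m - 2 * k)
      = ∑ j ∈ range (m + 1), 2 ^ (2 * j - m) * j.choose (m - j) * m.choose j := by
        rw [← sum_range_reflect]
        refine sum_congr rfl fun j hj => ?_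
        have hj : j ≤ m := Nat.lt_succ_iff.mp (mem_range.mp hj)
        rw [Nat.add_sub_cancel, Nat.sub_sub_self hj, Nat.choose_symm hj,
          show m - 2 * (m - j) = 2 * j - m by omega]
        ring
    _ = ∑ j ∈ range (m + 1),
          ((X * (X + C 2)) ^ j * 1 ^ (m - j) * (m.choose j : ℕ[X])).coeff m := by
        refine sum_congr rfl fun j hj => ?_
        rw [one_pow, mul_one, ← C_eq_natCast, coeff_mul_C, mul_pow,
          coeff_X_pow_mul_X_add_C_pow _ (Nat.lt_succ_iff.mp (mem_range.mp hj))]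
        simp only [Nat.cast_id]
    _ = (2 * m).choose m := by
        rw [← finsetSum_coeff, ← add_pow, ← hsq, coeff_X_add_one_pow, Nat.cast_id]

/-- For every `n ≥ 0`, `∑_{k=0}^n C(2n,k) C(2n-k,k) / 4^k = C(4n,2n) / 4^n`. -/
theorem sum_choose_div_four_pow (n : ℕ) :
    ∑ k ∈ Finset.range (n + 1),
        ((2 * n).choose k : ℚ) * ((2 * n - k).choose k : ℚ) / 4 ^ k =
      ((4 * n).choose (2 * n) : ℚ) / 4 ^ n := by
  have hvanish : ∀ k ∈ range (2 * n + 1), k ∉ range (n + 1) →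
      (2 * n).choose k * (2 * n - k).choose k * 2 ^ (2 * n - 2 * k) = 0 := by
    intro k _ hk
    have hlt : 2 * n - k < k := by rw [mem_range] at hk; omega
    rw [Nat.choose_eq_zero_of_lt hlt, mul_zero, zero_mul]
  have hsum := sum_choose_mul_choose_sub_mul_two_pow (2 * n)
  rw [← sum_subset (range_subset_range.mpr (by omega)) hvanish,
    show 2 * (2 * n) = 4 * n by ring] at hsum
  rw [← hsum, Nat.cast_sum, sum_div]
  refine sum_congr rfl fun k hk => ?_
  have hk : k ≤ n := Nat.lt_succ_iff.mp (mem_range.mp hk)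
  have hpow : (4 : ℚ) ^ n = 4 ^ (n - k) * 4 ^ k := by rw [← pow_add, Nat.sub_add_cancel hk]
  rw [show 2 * n - 2 * k = 2 * (n - k) by omega, pow_mul, hpow]
  push_cast
  field_simp
end

section
/- For every nonnegative integer n, sum_{k=0}^{n} C(2n+1, k) * C(2n+1-k, k) / 4^k = C(4n+1, 2n+1) / 4^n, as an identity of rational numbers. -/
/-!
By trinomial revision `C(m,k) C(m-k,k) = C(m,2k) C(2k,k)`, so with `m = 2n+1` the sum is
`2^{-m} ∑ₖ C(m,2k) C(2k,k) 2^{m-2k}`. The latter sum is the coefficient of `X^m` in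
`((X^2 + 1) + 2X)^m = (X + 1)^{2m}`: a term `C(m,i) (X^2+1)^i (2X)^{m-i}` of the binomial expansion
contributes `C(m,i) 2^{m-i} C(i,i/2)` for even `i` and nothing for odd `i`. Hence the sum is
`C(4n+2,2n+1) / 2^{2n+1}`, and `C(4n+2,2n+1) = 2 C(4n+1,2n+1)`.
-/

open Finset Polynomial

theorem Finset.sum_range_ite_two_dvd {M : Type*} [AddCommMonoid M] (f : ℕ → M) (m : ℕ) :
    ∑ i ∈ range (m + 1), (if 2 ∣ i then f i else 0) = ∑ k ∈ range (m / 2 + 1), f (2 * k) := by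
  rw [← sum_filter]
  refine sum_nbij' (· / 2) (2 * ·) ?_ ?_ ?_ ?_ ?_
  all_goals intro i; simp only [mem_filter, mem_range]
  iterate 4 omega
  rintro ⟨-, h⟩
  rw [Nat.mul_div_cancel' h]

theorem Polynomial.coeff_C_mul_expand_two_mul_X_pow {k m : ℕ} (hk : k ≤ m) (c : ℕ) :
    (C c * (expand ℕ 2 ((X + 1) ^ k) * X ^ (m - k))).coeff m =
      if 2 ∣ k then c * k.choose (k / 2) else 0 := by
  rw [coeff_C_mul, coeff_mul_X_pow', if_pos (Nat.sub_le m k), Nat.sub_sub_self hk,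
    coeff_expand two_pos, coeff_X_add_one_pow, Nat.cast_id, mul_ite, mul_zero]

theorem Nat.sum_choose_two_mul_mul_two_pow_mul_choose (m : ℕ) :
    ∑ k ∈ range (m / 2 + 1), m.choose (2 * k) * 2 ^ (m - 2 * k) * (2 * k).choose k =
      (2 * m).choose m := by
  have hsq : (X + 1 : ℕ[X]) ^ (2 * m) = (expand ℕ 2 (X + 1) + C 2 * X) ^ m := by
    rw [pow_mul, map_add, expand_X, map_one, C_ofNat]
    ring
  calc ∑ k ∈ range (m / 2 + 1), m.choose (2 * k) * 2 ^ (m - 2 * k) * (2 * k).choose k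
      = ∑ k ∈ range (m + 1),
          if 2 ∣ k then m.choose k * 2 ^ (m - k) * k.choose (k / 2) else 0 := by
        simp only [sum_range_ite_two_dvd, Nat.mul_div_cancel_left _ two_pos]
    _ = ∑ k ∈ range (m + 1),
          (C (m.choose k * 2 ^ (m - k)) * (expand ℕ 2 ((X + 1) ^ k) * X ^ (m - k))).coeff m := by
        refine sum_congr rfl fun k hk => ?_
        rw [coeff_C_mul_expand_two_mul_X_pow (Nat.lt_succ_iff.mp (mem_range.mp hk))]
    _ = ((expand ℕ 2 (X + 1) + C 2 * X) ^ m).coeff m := by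
        rw [add_pow, finsetSum_coeff]
        refine sum_congr rfl fun k _ => ?_
        rw [map_pow, mul_pow, ← C_pow, ← C_eq_natCast, Nat.cast_id, C_mul]
        ring_nf
    _ = (2 * m).choose m := by rw [← hsq, coeff_X_add_one_pow, Nat.cast_id]

theorem sum_choose_two_mul_mul_choose_div_four_pow (m : ℕ) :
    ∑ k ∈ range (m / 2 + 1), (m.choose (2 * k) * (2 * k).choose k : ℚ) / 4 ^ k =
      (2 * m).choose m / 2 ^ m := by
  rw [← Nat.sum_choose_two_mul_mul_two_pow_mul_choose, Nat.cast_sum, sum_div]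
  refine sum_congr rfl fun k hk => ?_
  have hkm : 2 * k ≤ m := by have := mem_range.mp hk; omega
  rw [Nat.cast_mul, Nat.cast_mul, Nat.cast_pow, Nat.cast_ofNat, pow_sub₀ _ two_ne_zero hkm,
    show (4 : ℚ) ^ k = 2 ^ (2 * k) by rw [pow_mul]; norm_num]
  field_simp

theorem Nat.choose_mul_choose_sub (m k : ℕ) :
    m.choose k * (m - k).choose k = m.choose (2 * k) * (2 * k).choose k := by
  obtain h | h := lt_or_ge m (2 * k)
  · rw [Nat.choose_eq_zero_of_lt h, Nat.choose_eq_zero_of_lt (by omega : m - k < k)]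
    simp
  · rw [Nat.choose_mul (by omega : k ≤ 2 * k), two_mul, Nat.add_sub_cancel]

theorem Nat.choose_two_mul_add_two_succ (m : ℕ) :
    (2 * m + 2).choose (m + 1) = 2 * (2 * m + 1).choose (m + 1) := by
  rw [Nat.choose_succ_succ', Nat.choose_symm_half, ← two_mul]

/-- For every `n ≥ 0`, `∑_{k=0}^n C(2n+1,k) C(2n+1-k,k) / 4^k = C(4n+1,2n+1) / 4^n`. -/
theorem sum_choose_odd_div_four_pow (n : ℕ) :
    ∑ k ∈ Finset.range (n + 1),
        ((2 * n + 1).choose k : ℚ) * ((2 * n + 1 - k).choose k : ℚ) / 4 ^ k =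
      ((4 * n + 1).choose (2 * n + 1) : ℚ) / 4 ^ n := by
  have hsum := sum_choose_two_mul_mul_choose_div_four_pow (2 * n + 1)
  rw [show (2 * n + 1) / 2 = n by omega, show 2 * (2 * n + 1) = 2 * (2 * n) + 2 by ring,
    Nat.choose_two_mul_add_two_succ, show 2 * (2 * n) + 1 = 4 * n + 1 by ring] at hsum
  simp_rw [← Nat.cast_mul, Nat.choose_mul_choose_sub, Nat.cast_mul, hsum, pow_succ, pow_mul]
  push_cast
  field_simp
  norm_num
end

section
/- For every nonnegative integer n, sum_{k=0}^{n} C(2n, k) * C(2n-k, k) * H_k / 4^k = (C(4n, 2n) / 4^n) * (3*H_{2n} - 2*H_{4n}), as an identity of rational numbers. -/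
/-!
Since `C(2n,k) C(2n-k,k) = C(2n,2k) C(2k,k)`, the sum is `B n = ∑ₖ t n k H_k` with
`t n k = C(2n,2k) C(2k,k) / 4^k`, a term hypergeometric in both `n` and `k`. A Zeilberger
certificate makes `(2n+1)(2n+2) t (n+1) k - (4n+1)(4n+3) t n k` telescope in `k`, which gives
`(2n+1)(2n+2) A (n+1) = (4n+1)(4n+3) A n` for `A n = ∑ₖ t n k`, hence `A n = C(4n,2n) / 4^n`.
Against the weights `H_k`, summation by parts turns the same identity into a first-order
recurrence for `B` whose inhomogeneous term, a second (Gosper) telescoping sum, is a multiple of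
`A n`; it is exactly the recurrence satisfied by `A n (3 H_{2n} - 2 H_{4n})`.
-/

open Finset

namespace Nat

theorem cast_choose_succ_mul {R : Type*} [CommRing R] (m j : ℕ) :
    (m.choose (j + 1) : R) * (j + 1) = m.choose j * (m - j) := by
  rcases le_or_gt j m with h | h
  · rw [← cast_sub h]
    exact_mod_cast congrArg (Nat.cast : ℕ → R) (choose_succ_right_eq m j)
  · simp [choose_eq_zero_of_lt h, choose_eq_zero_of_lt (h.trans (lt_succ_self j))]

theorem cast_choose_mul_succ {R : Type*} [CommRing R] (m j : ℕ) :
    (m.choose j : R) * (m + 1) = (m + 1).choose j * (m + 1 - j) := by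
  rcases le_or_gt j (m + 1) with h | h
  · rw [← cast_succ, ← cast_sub h]
    exact_mod_cast congrArg (Nat.cast : ℕ → R) (choose_mul_succ_eq m j)
  · simp [choose_eq_zero_of_lt h, choose_eq_zero_of_lt ((lt_succ_self m).trans h)]

theorem choose_mul_choose_sub_s15 (m k : ℕ) :
    m.choose k * (m - k).choose k = m.choose (2 * k) * (2 * k).choose k := by
  rw [choose_mul (by omega : k ≤ 2 * k), show 2 * k - k = k by omega]

end Nat

theorem sum_range_mul_harmonic (φ : ℕ → ℚ) (m : ℕ) :
    ∑ k ∈ range m, ((k + 1 : ℕ) * φ (k + 1) - k * φ k) * harmonic k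
      = m * φ m * harmonic m - ∑ k ∈ range m, φ (k + 1) := by
  induction m with
  | zero => simp
  | succ m ih =>
    rw [sum_range_succ, ih, sum_range_succ, harmonic_succ]
    have : ((m + 1 : ℕ) : ℚ) ≠ 0 := by positivity
    field_simp
    ring

theorem harmonic_combination_succ (n : ℕ) :
    (2 * n + 1) * (2 * n + 2) * (4 * n + 1) * (4 * n + 3) *
        ((3 * harmonic (2 * (n + 1)) - 2 * harmonic (4 * (n + 1)))
          - (3 * harmonic (2 * n) - 2 * harmonic (4 * n)))
      = 64 * n ^ 3 + 96 * n ^ 2 + 40 * n + 2 := by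
  simp only [show 2 * (n + 1) = 2 * n + 1 + 1 by ring, show 4 * (n + 1) = 4 * n + 3 + 1 by ring,
    harmonic_succ]
  push_cast
  field_simp
  ring

def binomTerm (n k : ℕ) : ℚ := (2 * n).choose (2 * k) * k.centralBinom / 4 ^ k

theorem binomTerm_eq_zero {n k : ℕ} (h : n < k) : binomTerm n k = 0 := by
  simp [binomTerm, Nat.choose_eq_zero_of_lt (by omega : 2 * n < 2 * k)]

theorem binomTerm_succ_right (n k : ℕ) :
    4 * ((k : ℚ) + 1) ^ 2 * binomTerm n (k + 1)
      = (2 * n - 2 * k) * (2 * n - 2 * k - 1) * binomTerm n k := by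
  have hc₁ := Nat.cast_choose_succ_mul (R := ℚ) (2 * n) (2 * k)
  have hc₂ := Nat.cast_choose_succ_mul (R := ℚ) (2 * n) (2 * k + 1)
  have hb : ((k : ℚ) + 1) * (k + 1).centralBinom = 2 * (2 * k + 1) * k.centralBinom := by
    exact_mod_cast Nat.succ_mul_centralBinom_succ k
  simp only [binomTerm, pow_succ, show 2 * (k + 1) = 2 * k + 1 + 1 by ring]
  push_cast at hc₁ hc₂ ⊢
  set p : ℚ := 4 ^ k
  linear_combination ((k + 1) * ((2 * n).choose (2 * k + 1 + 1) : ℚ) / p) * hb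
    + ((2 * k + 1) * (k.centralBinom : ℚ) / p) * hc₂
    + ((2 * n - 2 * k - 1) * (k.centralBinom : ℚ) / p) * hc₁

theorem binomTerm_succ_left (n k : ℕ) :
    (2 * n + 2 - 2 * k) * (2 * n + 1 - 2 * k) * binomTerm (n + 1) k
      = (2 * n + 1) * (2 * n + 2) * binomTerm n k := by
  have hc₁ := Nat.cast_choose_mul_succ (R := ℚ) (2 * n) (2 * k)
  have hc₂ := Nat.cast_choose_mul_succ (R := ℚ) (2 * n + 1) (2 * k)
  simp only [binomTerm, show 2 * (n + 1) = 2 * n + 1 + 1 by ring]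
  push_cast at hc₁ hc₂ ⊢
  set p : ℚ := 4 ^ k
  linear_combination (-(2 * n + 2) * (k.centralBinom : ℚ) / p) * hc₁
    - ((2 * n + 1 - 2 * k) * (k.centralBinom : ℚ) / p) * hc₂

/- The certificates produced by Zeilberger's and Gosper's algorithms; with the two shift
relations above, each telescoping identity below is a polynomial identity in `n` and `k`. -/
def sumCert (n j : ℕ) : ℚ := 4 * j * (2 * j * (4 * n + 3) - (12 * n ^ 2 + 18 * n + 7))

def remainderCert (n j : ℕ) : ℚ :=
  j * (-16 * j ^ 2 * (12 * n ^ 2 + 18 * n + 7) + 8 * j * (48 * n ^ 3 + 108 * n ^ 2 + 82 * n + 21)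
    - 8 * (24 * n ^ 4 + 72 * n ^ 3 + 80 * n ^ 2 + 39 * n + 7))

theorem binomTerm_telescope (n k : ℕ) :
    (2 * n + 1) * (2 * n + 2) *
        ((2 * n + 1) * (2 * n + 2) * binomTerm (n + 1) k
          - (4 * n + 1) * (4 * n + 3) * binomTerm n k)
      = (k + 1 : ℕ) * (sumCert n (k + 1) * binomTerm (n + 1) (k + 1))
          - k * (sumCert n k * binomTerm (n + 1) k) := by
  have hr := binomTerm_succ_right (n + 1) k
  have hl := binomTerm_succ_left n k
  simp only [sumCert]
  push_cast at hr ⊢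
  linear_combination (-(2 * (k + 1) * (4 * n + 3) - (12 * n ^ 2 + 18 * n + 7)) : ℚ) * hr
    + ((4 * n + 1) * (4 * n + 3) : ℚ) * hl

theorem remainder_telescope (n k : ℕ) :
    (2 * n + 1) * (2 * n + 2) * (sumCert n (k + 1) * binomTerm (n + 1) (k + 1)
        + (64 * n ^ 3 + 96 * n ^ 2 + 40 * n + 2) * binomTerm n k)
      = remainderCert n (k + 1) * binomTerm (n + 1) (k + 1)
          - remainderCert n k * binomTerm (n + 1) k := by
  have hr := binomTerm_succ_right (n + 1) k
  have hl := binomTerm_succ_left n k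
  simp only [sumCert, remainderCert]
  push_cast at hr ⊢
  linear_combination
    (4 * (k + 1) * (12 * n ^ 2 + 18 * n + 7) - (64 * n ^ 3 + 144 * n ^ 2 + 112 * n + 30) : ℚ) * hr
    - (64 * n ^ 3 + 96 * n ^ 2 + 40 * n + 2 : ℚ) * hl

def binomSum (n : ℕ) : ℚ := ∑ k ∈ range (n + 1), binomTerm n k

def binomHarmonicSum (n : ℕ) : ℚ := ∑ k ∈ range (n + 1), binomTerm n k * harmonic k

theorem sum_range_add_two_binomTerm (n : ℕ) :
    ∑ k ∈ range (n + 2), binomTerm n k = binomSum n := by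
  rw [sum_range_succ, binomTerm_eq_zero n.lt_succ_self, add_zero, binomSum]

theorem sum_range_add_two_binomTerm_mul_harmonic (n : ℕ) :
    ∑ k ∈ range (n + 2), binomTerm n k * harmonic k = binomHarmonicSum n := by
  rw [sum_range_succ, binomTerm_eq_zero n.lt_succ_self, zero_mul, add_zero, binomHarmonicSum]

theorem binomSum_succ (n : ℕ) :
    (2 * n + 1) * (2 * n + 2) * binomSum (n + 1) = (4 * n + 1) * (4 * n + 3) * binomSum n := by
  have htel : ∑ k ∈ range (n + 2), (2 * n + 1) * (2 * n + 2) *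
      ((2 * n + 1) * (2 * n + 2) * binomTerm (n + 1) k
        - (4 * n + 1) * (4 * n + 3) * binomTerm n k) = 0 := by
    rw [sum_congr rfl fun k _ ↦ binomTerm_telescope n k,
      sum_range_sub (fun j ↦ (j : ℕ) * (sumCert n j * binomTerm (n + 1) j))]
    simp [binomTerm_eq_zero (by omega : n + 1 < n + 2)]
  rw [← mul_sum, sum_sub_distrib, ← mul_sum, ← mul_sum, sum_range_add_two_binomTerm] at htel
  have hn : (2 * (n : ℚ) + 1) * (2 * n + 2) ≠ 0 := by positivity
  rw [binomSum]
  linear_combination (mul_eq_zero.mp htel).resolve_left hn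

theorem binomSum_eq (n : ℕ) : binomSum n = (2 * n).centralBinom / 4 ^ n := by
  induction n with
  | zero => simp [binomSum, binomTerm]
  | succ n ih =>
    have h₁ : ((2 * n + 1 : ℕ) : ℚ) * (2 * n + 1).centralBinom
        = 2 * (2 * (2 * n) + 1) * (2 * n).centralBinom := by
      exact_mod_cast Nat.succ_mul_centralBinom_succ (2 * n)
    have h₂ : ((2 * n + 1 + 1 : ℕ) : ℚ) * (2 * n + 1 + 1).centralBinom
        = 2 * (2 * (2 * n + 1) + 1) * (2 * n + 1).centralBinom := by
      exact_mod_cast Nat.succ_mul_centralBinom_succ (2 * n + 1)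
    have h := binomSum_succ n
    rw [ih] at h
    rw [show 2 * (n + 1) = 2 * n + 1 + 1 by ring, pow_succ]
    have hn : (2 * (n : ℚ) + 1) * (2 * n + 2) ≠ 0 := by positivity
    push_cast at h₁ h₂
    refine mul_left_cancel₀ hn ?_
    linear_combination h - ((2 * n + 1) * h₂ + 2 * (4 * n + 3) * h₁) / (4 * 4 ^ n)

theorem binomHarmonicSum_succ (n : ℕ) :
    (2 * n + 1) * (2 * n + 2) *
        ((2 * n + 1) * (2 * n + 2) * binomHarmonicSum (n + 1)
          - (4 * n + 1) * (4 * n + 3) * binomHarmonicSum n)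
      = (64 * n ^ 3 + 96 * n ^ 2 + 40 * n + 2) * binomSum n := by
  have hvanish : binomTerm (n + 1) (n + 2) = 0 := binomTerm_eq_zero (by omega)
  have hparts : (2 * n + 1) * (2 * n + 2) *
      ((2 * n + 1) * (2 * n + 2) * binomHarmonicSum (n + 1)
        - (4 * n + 1) * (4 * n + 3) * binomHarmonicSum n)
      = -∑ k ∈ range (n + 2), sumCert n (k + 1) * binomTerm (n + 1) (k + 1) := by
    have h := sum_range_mul_harmonic (fun j ↦ sumCert n j * binomTerm (n + 1) j) (n + 2)
    rw [hvanish, mul_zero, mul_zero, zero_mul, zero_sub] at h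
    rw [← h, ← sum_range_add_two_binomTerm_mul_harmonic n, binomHarmonicSum, mul_sum, mul_sum,
      ← sum_sub_distrib, mul_sum]
    exact sum_congr rfl fun k _ ↦ by linear_combination harmonic k * binomTerm_telescope n k
  have hremainder : (2 * n + 1) * (2 * n + 2) *
      (∑ k ∈ range (n + 2), sumCert n (k + 1) * binomTerm (n + 1) (k + 1)
        + (64 * n ^ 3 + 96 * n ^ 2 + 40 * n + 2) * binomSum n) = 0 := by
    rw [← sum_range_add_two_binomTerm n, mul_sum, ← sum_add_distrib, mul_sum,
      sum_congr rfl fun k _ ↦ remainder_telescope n k,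
      sum_range_sub (fun j ↦ remainderCert n j * binomTerm (n + 1) j)]
    simp [remainderCert, hvanish]
  have hn : (2 * (n : ℚ) + 1) * (2 * n + 2) ≠ 0 := by positivity
  linear_combination hparts - (mul_eq_zero.mp hremainder).resolve_left hn

theorem binomHarmonicSum_eq (n : ℕ) :
    binomHarmonicSum n = binomSum n * (3 * harmonic (2 * n) - 2 * harmonic (4 * n)) := by
  induction n with
  | zero => simp [binomHarmonicSum]
  | succ n ih =>
    have hn : ((2 * (n : ℚ) + 1) * (2 * n + 2)) ^ 2 ≠ 0 := by positivity
    refine mul_left_cancel₀ hn ?_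
    linear_combination binomHarmonicSum_succ n
      + (2 * n + 1) * (2 * n + 2) * (4 * n + 1) * (4 * n + 3) * ih
      - binomSum n * harmonic_combination_succ n
      - (2 * n + 1) * (2 * n + 2) * (3 * harmonic (2 * (n + 1)) - 2 * harmonic (4 * (n + 1)))
        * binomSum_succ n

/-- For every `n ≥ 0`,
`∑_{k=0}^n C(2n,k) C(2n-k,k) H_k / 4^k = (C(4n,2n)/4^n)(3H_{2n} - 2H_{4n})`. -/
theorem sum_choose_harmonic_div_four_pow (n : ℕ) :
    ∑ k ∈ Finset.range (n + 1),
        ((2 * n).choose k : ℚ) * ((2 * n - k).choose k : ℚ) * harmonic k / 4 ^ k =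
      ((4 * n).choose (2 * n) : ℚ) / 4 ^ n * (3 * harmonic (2 * n) - 2 * harmonic (4 * n)) := by
  have hsum : ∑ k ∈ Finset.range (n + 1),
      ((2 * n).choose k : ℚ) * ((2 * n - k).choose k : ℚ) * harmonic k / 4 ^ k
      = binomHarmonicSum n := by
    rw [binomHarmonicSum]
    refine sum_congr rfl fun k _ ↦ ?_
    rw [binomTerm, ← Nat.cast_mul, Nat.choose_mul_choose_sub_s15, Nat.centralBinom_eq_two_mul_choose]
    push_cast
    ring
  rw [hsum, binomHarmonicSum_eq, binomSum_eq, Nat.centralBinom_eq_two_mul_choose,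
    show 2 * (2 * n) = 4 * n by ring]
end

section
/- For every nonnegative integer n, sum_{k=0}^{n} C(2n+1, k) * C(2n+1-k, k) * H_k / 4^k = (C(4n+1, 2n+1) / 4^n) * (3*H_{2n+1} - 2*H_{4n+2}), as an identity of rational numbers. -/
/-!
The summand is `w n k * H_k` with `w n k = C(2n+1, 2k) C(2k, k) / 4^k`. Both `w n (k+1) / w n k`
and `w (n+1) (k+1) / w n k` are rational in `n` and `k`, so summation by parts along a row
relates the row sums `∑ k, w n k * u k` at the weights `u = 1, k, k², H_k, k² H_k`, while the
diagonal step relates the row sum of `k² u` in row `n+1` to that of `u (· + 1)` in row `n`.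
Eliminating the auxiliary moments leaves first-order recurrences in `n` for the row sums of `1`
and of `H`, which `C(4n+1, 2n+1) / 4^n` and `C(4n+1, 2n+1) / 4^n * (3 H_{2n+1} - 2 H_{4n+2})`
satisfy.
-/

open Finset

theorem Nat.choose_mul_choose_sub_eq (m k : ℕ) :
    m.choose k * (m - k).choose k = m.choose (2 * k) * k.centralBinom := by
  rw [Nat.centralBinom_eq_two_mul_choose, Nat.choose_mul (by omega), two_mul, Nat.add_sub_cancel]

theorem Finset.sum_range_shift_of_eq_zero {M : Type*} [AddCommMonoid M] {g : ℕ → M} {n : ℕ}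
    (h₀ : g 0 = 0) (hn : g (n + 1) = 0) :
    ∑ k ∈ range (n + 1), g (k + 1) = ∑ k ∈ range (n + 1), g k := by
  rw [← add_zero (∑ k ∈ range (n + 1), g (k + 1)), ← h₀, ← sum_range_succ', sum_range_succ, hn,
    add_zero]

theorem harmonic_sub_one_mul_sq (k : ℕ) :
    (k : ℚ) ^ 2 * harmonic (k - 1) = k ^ 2 * harmonic k - k := by
  cases k with
  | zero => simp
  | succ k =>
    rw [harmonic_succ, add_tsub_cancel_right]
    push_cast
    field_simp
    ring

theorem three_mul_harmonic_sub_two_mul_harmonic_succ (n : ℕ) :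
    3 * harmonic (2 * (n + 1) + 1) - 2 * harmonic (4 * (n + 1) + 2) =
      3 * harmonic (2 * n + 1) - 2 * harmonic (4 * n + 2) +
        (1 / (n + 1) + 2 / (2 * n + 3) - 2 / (4 * n + 3) - 2 / (4 * n + 5)) := by
  rw [show 2 * (n + 1) + 1 = 2 * n + 1 + 1 + 1 by ring,
    show 4 * (n + 1) + 2 = 4 * n + 2 + 1 + 1 + 1 + 1 by ring]
  simp only [harmonic_succ]
  push_cast
  field_simp
  ring

theorem choose_four_mul_add_five (n : ℕ) :
    ((4 * n + 5).choose (2 * n + 3) : ℚ) * ((2 * n + 2) * (2 * n + 3)) =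
      4 * (4 * n + 3) * (4 * n + 5) * (4 * n + 1).choose (2 * n + 1) := by
  have h₁ := Nat.add_one_mul_choose_eq (4 * n + 4) (2 * n + 2)
  have h₂ := Nat.add_one_mul_choose_eq (4 * n + 3) (2 * n + 1)
  have h₃ := Nat.choose_mul_succ_eq (4 * n + 2) (2 * n + 1)
  have h₄ := Nat.choose_mul_succ_eq (4 * n + 1) (2 * n + 1)
  qify [show 2 * n + 1 ≤ 4 * n + 2 + 1 by omega, show 2 * n + 1 ≤ 4 * n + 1 + 1 by omega]
    at h₁ h₂ h₃ h₄
  apply mul_left_cancel₀ (show ((2 * n + 2) * (2 * n + 1) : ℚ) ≠ 0 by positivity)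
  linear_combination (-(2 * n + 2) ^ 2 * (2 * n + 1)) * h₁ -
    (2 * n + 2) * (2 * n + 1) * (4 * n + 5) * h₂ - (2 * n + 1) * (4 * n + 5) * (4 * n + 4) * h₃ -
    (4 * n + 5) * (4 * n + 4) * (4 * n + 3) * h₄

def chooseWeight (n k : ℕ) : ℚ := ((2 * n + 1).choose (2 * k) * k.centralBinom : ℚ) / 4 ^ k

theorem chooseWeight_of_lt {n k : ℕ} (h : n < k) : chooseWeight n k = 0 := by
  simp [chooseWeight, Nat.choose_eq_zero_of_lt (show 2 * n + 1 < 2 * k by omega)]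

theorem chooseWeight_succ_succ (n k : ℕ) :
    4 * ((k : ℚ) + 1) ^ 2 * chooseWeight (n + 1) (k + 1) =
      (2 * n + 2) * (2 * n + 3) * chooseWeight n k := by
  have h₁ := Nat.add_one_mul_choose_eq (2 * n + 2) (2 * k + 1)
  have h₂ := Nat.add_one_mul_choose_eq (2 * n + 1) (2 * k)
  have h₃ := Nat.succ_mul_centralBinom_succ k
  qify at h₁ h₂ h₃
  set X := ((2 * n + 2 + 1).choose (2 * k + 1 + 1) : ℚ)
  set Y := ((2 * n + 2).choose (2 * k + 1) : ℚ)
  set Z := ((2 * n + 1).choose (2 * k) : ℚ)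
  have key : ((k : ℚ) + 1) ^ 2 * X * (k + 1).centralBinom =
      (2 * n + 2) * (2 * n + 3) * Z * k.centralBinom := by
    apply mul_left_cancel₀ (show (2 * (2 * k + 1) : ℚ) ≠ 0 by positivity)
    linear_combination (-(2 * k + 1) * (k + 1) * ((k + 1).centralBinom : ℚ)) * h₁ +
      (-(k + 1) * (2 * n + 3) * ((k + 1).centralBinom : ℚ)) * h₂ +
      ((2 * n + 2) * (2 * n + 3) * Z) * h₃
  simp only [chooseWeight, pow_succ, show 2 * (n + 1) + 1 = 2 * n + 2 + 1 by ring,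
    show 2 * (k + 1) = 2 * k + 1 + 1 by ring]
  field_simp
  linear_combination key

theorem chooseWeight_succ_right (n k : ℕ) :
    4 * ((k : ℚ) + 1) ^ 2 * chooseWeight n (k + 1) =
      (2 * n + 1 - 2 * k) * (2 * n - 2 * k) * chooseWeight n k := by
  rcases lt_or_ge n k with hk | hk
  · rw [chooseWeight_of_lt hk, chooseWeight_of_lt (by omega)]
    ring
  have h₁ := Nat.choose_succ_right_eq (2 * n + 1) (2 * k + 1)
  have h₂ := Nat.choose_succ_right_eq (2 * n + 1) (2 * k)
  have h₃ := Nat.succ_mul_centralBinom_succ k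
  qify [show 2 * k + 1 ≤ 2 * n + 1 by omega, show 2 * k ≤ 2 * n + 1 by omega] at h₁ h₂ h₃
  set X := ((2 * n + 1).choose (2 * k + 1 + 1) : ℚ)
  set Y := ((2 * n + 1).choose (2 * k + 1) : ℚ)
  set Z := ((2 * n + 1).choose (2 * k) : ℚ)
  have key : ((k : ℚ) + 1) ^ 2 * X * (k + 1).centralBinom =
      (2 * n + 1 - 2 * k) * (2 * n - 2 * k) * Z * k.centralBinom := by
    apply mul_left_cancel₀ (show (2 * (2 * k + 1) : ℚ) ≠ 0 by positivity)
    linear_combination ((2 * k + 1) * (k + 1) * ((k + 1).centralBinom : ℚ)) * h₁ +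
      ((k + 1) * (2 * n - 2 * k) * ((k + 1).centralBinom : ℚ)) * h₂ +
      ((2 * n + 1 - 2 * k) * (2 * n - 2 * k) * Z) * h₃
  simp only [chooseWeight, pow_succ, show 2 * (k + 1) = 2 * k + 1 + 1 by ring]
  field_simp
  linear_combination key

def rowSum (n : ℕ) (u : ℕ → ℚ) : ℚ := ∑ k ∈ range (n + 1), chooseWeight n k * u k

theorem rowSum_shift (n : ℕ) (u : ℕ → ℚ) :
    rowSum n (fun k => (2 * n + 1 - 2 * k) * (2 * n - 2 * k) * u (k + 1)) =
      4 * rowSum n (fun k => k ^ 2 * u k) := by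
  rw [rowSum, rowSum, mul_sum, ← sum_range_shift_of_eq_zero
    (g := fun k => 4 * (chooseWeight n k * (k ^ 2 * u k))) (by simp)
    (by simp [chooseWeight_of_lt (Nat.lt_succ_self n)])]
  refine sum_congr rfl fun k _ => ?_
  push_cast
  linear_combination u (k + 1) * (chooseWeight_succ_right n k).symm

theorem rowSum_succ_sq_mul (n : ℕ) (u : ℕ → ℚ) :
    2 * rowSum (n + 1) (fun k => k ^ 2 * u k) =
      (n + 1) * (2 * n + 3) * rowSum n (fun k => u (k + 1)) := by
  rw [rowSum, rowSum, sum_range_succ', mul_add, mul_sum, mul_sum]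
  simp only [Nat.cast_zero, zero_pow two_ne_zero, zero_mul, mul_zero, add_zero]
  refine sum_congr rfl fun k _ => ?_
  push_cast
  linear_combination u (k + 1) / 2 * chooseWeight_succ_succ n k

theorem rowSum_id (n : ℕ) :
    (4 * n + 1) * rowSum n (fun k => k) = n * (2 * n + 1) * rowSum n (fun _ => 1) := by
  linear_combination (norm := skip) (-1 / 2 : ℚ) * rowSum_shift n (fun _ => 1)
  simp only [rowSum, mul_sum, ← sum_add_distrib, ← sum_sub_distrib]
  exact sum_eq_zero fun k _ => by ring

/- The weight `r k = 2n² - 3n - 1 + (4n+1) k` fed to `rowSum_shift` here and in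
`rowSum_sq_mul_harmonic` is chosen so that
`(2n+1-2k)(2n-2k) r (k+1) - 4k² r k = 2 (n²(2n+1)² - (16n²-1) k²)` has no linear term. -/
theorem rowSum_sq (n : ℕ) :
    (16 * n ^ 2 - 1) * rowSum n (fun k => k ^ 2) =
      n ^ 2 * (2 * n + 1) ^ 2 * rowSum n (fun _ => 1) := by
  linear_combination (norm := skip) (-1 / 2 : ℚ) *
    rowSum_shift n (fun k => 2 * n ^ 2 - 3 * n - 1 + (4 * n + 1) * k)
  simp only [rowSum, mul_sum, ← sum_add_distrib, ← sum_sub_distrib]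
  exact sum_eq_zero fun k _ => by push_cast; ring

theorem rowSum_sq_mul_harmonic (n : ℕ) :
    n ^ 2 * (2 * n + 1) ^ 2 * rowSum n harmonic +
        2 * (2 * n ^ 2 - 3 * n - 1) * rowSum n (fun k => k) +
        2 * (4 * n + 1) * rowSum n (fun k => k ^ 2) =
      (16 * n ^ 2 - 1) * rowSum n (fun k => k ^ 2 * harmonic k) := by
  linear_combination (norm := skip) (1 / 2 : ℚ) *
    rowSum_shift n (fun k => (2 * n ^ 2 - 3 * n - 1 + (4 * n + 1) * k) * harmonic (k - 1))
  simp only [rowSum, mul_sum, ← sum_add_distrib, ← sum_sub_distrib, add_tsub_cancel_right]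
  refine sum_eq_zero fun k _ => ?_
  push_cast
  linear_combination (2 * chooseWeight n k * (2 * n ^ 2 - 3 * n - 1 + (4 * n + 1) * k)) *
    harmonic_sub_one_mul_sq k

theorem rowSum_succ_sq_mul_harmonic (n : ℕ) :
    2 * rowSum (n + 1) (fun k => k ^ 2 * harmonic k) =
      2 * rowSum (n + 1) (fun k => k) + (n + 1) * (2 * n + 3) * rowSum n harmonic := by
  have h := rowSum_succ_sq_mul n (fun k => harmonic (k - 1))
  simp only [add_tsub_cancel_right] at h
  rw [← h]
  simp only [rowSum, mul_sum, ← sum_add_distrib]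
  refine sum_congr rfl fun k _ => ?_
  linear_combination -2 * chooseWeight (n + 1) k * harmonic_sub_one_mul_sq k

theorem rowSum_one_succ (n : ℕ) :
    rowSum (n + 1) (fun _ => 1) =
      (4 * n + 3) * (4 * n + 5) / ((2 * n + 2) * (2 * n + 3)) * rowSum n (fun _ => 1) := by
  have hsq := rowSum_sq (n + 1)
  have hshift := rowSum_succ_sq_mul n (fun _ => 1)
  simp only [mul_one] at hshift
  push_cast at hsq
  rw [div_mul_eq_mul_div, eq_div_iff (by positivity)]
  apply mul_left_cancel₀ (show ((n : ℚ) + 1) * (2 * n + 3) ≠ 0 by positivity)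
  linear_combination (4 * n + 3) * (4 * n + 5) * hshift - 2 * hsq

theorem rowSum_harmonic_succ (n : ℕ) :
    rowSum (n + 1) harmonic =
      (4 * n + 3) * (4 * n + 5) / ((2 * n + 2) * (2 * n + 3)) * rowSum n harmonic +
        (1 / (n + 1) + 2 / (2 * n + 3) - 2 / (4 * n + 3) - 2 / (4 * n + 5)) *
          rowSum (n + 1) (fun _ => 1) := by
  have h₁ := rowSum_id (n + 1)
  have h₂ := rowSum_sq (n + 1)
  have h₃ := rowSum_sq_mul_harmonic (n + 1)
  have h₄ := rowSum_succ_sq_mul_harmonic n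
  push_cast at h₁ h₂ h₃
  set A := rowSum (n + 1) (fun _ => 1)
  set M₁ := rowSum (n + 1) (fun k => k)
  set M₂ := rowSum (n + 1) (fun k => k ^ 2)
  set S₂ := rowSum (n + 1) (fun k => k ^ 2 * harmonic k)
  have hM₁ : M₁ = (n + 1) * (2 * n + 3) / (4 * n + 5) * A := by
    field_simp
    linear_combination h₁
  have hM₂ : M₂ = (n + 1) ^ 2 * (2 * n + 3) ^ 2 / ((4 * n + 3) * (4 * n + 5)) * A := by
    field_simp
    linear_combination h₂
  have hS₂ : S₂ = M₁ + (n + 1) * (2 * n + 3) / 2 * rowSum n harmonic := by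
    linear_combination h₄ / 2
  have hS : rowSum (n + 1) harmonic = ((4 * n + 3) * (4 * n + 5) * S₂
      - 2 * (2 * (n + 1) ^ 2 - 3 * (n + 1) - 1) * M₁ - 2 * (4 * (n + 1) + 1) * M₂) /
        ((n + 1) ^ 2 * (2 * n + 3) ^ 2) := by
    field_simp
    linear_combination h₃
  rw [hS, hS₂, hM₁, hM₂]
  field_simp
  ring

theorem rowSum_one (n : ℕ) :
    rowSum n (fun _ => 1) = ((4 * n + 1).choose (2 * n + 1) : ℚ) / 4 ^ n := by
  induction n with
  | zero => simp [rowSum, chooseWeight]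
  | succ n ih =>
    rw [rowSum_one_succ, ih, pow_succ, show 4 * (n + 1) + 1 = 4 * n + 5 by ring,
      show 2 * (n + 1) + 1 = 2 * n + 3 by ring]
    field_simp
    linear_combination -choose_four_mul_add_five n

theorem rowSum_harmonic (n : ℕ) :
    rowSum n harmonic =
      rowSum n (fun _ => 1) * (3 * harmonic (2 * n + 1) - 2 * harmonic (4 * n + 2)) := by
  induction n with
  | zero => norm_num [rowSum, harmonic_succ]
  | succ n ih =>
    rw [rowSum_harmonic_succ, ih, three_mul_harmonic_sub_two_mul_harmonic_succ, rowSum_one_succ]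
    ring

/-- For every `n ≥ 0`,
`∑_{k=0}^n C(2n+1,k) C(2n+1-k,k) H_k / 4^k = (C(4n+1,2n+1)/4^n)(3H_{2n+1} - 2H_{4n+2})`. -/
theorem sum_choose_odd_harmonic_div_four_pow (n : ℕ) :
    ∑ k ∈ Finset.range (n + 1),
        ((2 * n + 1).choose k : ℚ) * ((2 * n + 1 - k).choose k : ℚ) * harmonic k / 4 ^ k =
      ((4 * n + 1).choose (2 * n + 1) : ℚ) / 4 ^ n *
        (3 * harmonic (2 * n + 1) - 2 * harmonic (4 * n + 2)) := by
  rw [← rowSum_one, ← rowSum_harmonic, rowSum]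
  refine sum_congr rfl fun k _ => ?_
  have h : ((2 * n + 1).choose k * (2 * n + 1 - k).choose k : ℚ) =
      (2 * n + 1).choose (2 * k) * k.centralBinom := by
    exact_mod_cast Nat.choose_mul_choose_sub_eq (2 * n + 1) k
  rw [chooseWeight, ← h]
  ring
end

section
/- For every nonnegative integer n, sum_{k=0}^{n} C(2n, k) * C(2n-k, k) * (H_k^2 + H_k^{(2)}) / 4^k = (C(4n, 2n) / 4^n) * (5*H_{2n}^{(2)} - 4*H_{4n}^{(2)}) + (C(4n, 2n) / 4^n) * (3*H_{2n} - 2*H_{4n})^2, as an identity of rational numbers. -/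
/-- `H2 n = ∑_{0 < k ≤ n} 1/k²`, the generalized harmonic number of order 2. -/
def H2 (n : ℕ) : ℚ := ∑ i ∈ Finset.range n, 1 / ((i : ℚ) + 1) ^ 2

/-!
The summand `a m k = C(m,k) C(m-k,k) / 4^k = m! / (k! k! (m-2k)! 4^k)` is the part of the
coefficient of `t^m` in `(1 + t + t²/4)^m = (1 + t/2)^(2m)` coming from `k` factors `t²/4`, so
`∑ₖ a m k = C(2m,m) / 2^m`. Being hypergeometric in both `m` and `k`, `a` satisfies a first-order
recurrence in each variable; combining them and summing by parts against a weight `w` gives,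
for all `m`,

  `(m+1)² S_{m+1}(w) = (2m+1)(m+1) S_m(w) + 4 S_{m+1}(k² ∇w)`,
  `m(m-1) S_m(w) = 2(2m-1) S_m(k w) - 4 S_m(k² ∇w)`,

where `S_m(w) = ∑ₖ a m k · w k` (`weightedSum m w`) and `∇` is the backward difference.
As `k² ∇H = k` and `k² ∇(H² + H⁽²⁾) = 2 k H`, these relations close up on the weights
`1, k, H, k H, H² + H⁽²⁾`, and induction on `m` gives closed forms for all of them.
The theorem is the case `m = 2n`.
-/

namespace TrinomialHarmonic

open Finset Nat

theorem sum_range_sub_succ_mul_eq_sum_mul_sub_pred {R : Type*} [CommRing R] (B w : ℕ → R)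
    (N : ℕ) (h0 : B 0 = 0) (hN : B (N + 1) = 0) :
    ∑ k ∈ range (N + 1), (B k - B (k + 1)) * w k =
      ∑ k ∈ range (N + 1), B k * (w k - w (k - 1)) := by
  have shift : ∑ k ∈ range (N + 1), B (k + 1) * w k = ∑ k ∈ range (N + 1), B k * w (k - 1) := by
    rw [sum_range_succ, sum_range_succ', hN, h0]
    simp
  simp only [sub_mul, mul_sub, sum_sub_distrib, shift]

def trinomialTerm (m k : ℕ) : ℚ := (m.choose k : ℚ) * ((m - k).choose k : ℚ) / 4 ^ k

theorem trinomialTerm_eq_zero {m k : ℕ} (h : m < 2 * k) : trinomialTerm m k = 0 := by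
  simp [trinomialTerm, Nat.choose_eq_zero_of_lt (show m - k < k by omega)]

theorem trinomialTerm_two_mul_add (k j : ℕ) :
    trinomialTerm (2 * k + j) k = (2 * k + j)! / ((k ! : ℚ) ^ 2 * j ! * 4 ^ k) := by
  have hsub : 2 * k + j - k = k + j := by omega
  rw [trinomialTerm, hsub, Nat.cast_choose ℚ (by omega : k ≤ 2 * k + j),
    Nat.cast_choose ℚ (by omega : k ≤ k + j), hsub, Nat.add_sub_cancel_left]
  field_simp

theorem sub_two_mul_mul_trinomialTerm_succ (m k : ℕ) :
    ((m : ℚ) + 1 - 2 * k) * trinomialTerm (m + 1) k = (m + 1) * trinomialTerm m k := by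
  rcases lt_or_ge m (2 * k) with h | h
  · rw [trinomialTerm_eq_zero h]
    rcases (show m + 1 = 2 * k ∨ m + 1 < 2 * k by omega) with h' | h'
    · simp [show ((m : ℚ) + 1) = 2 * k by exact_mod_cast h']
    · simp [trinomialTerm_eq_zero h']
  · obtain ⟨j, rfl⟩ := Nat.exists_eq_add_of_le h
    rw [add_assoc, trinomialTerm_two_mul_add, trinomialTerm_two_mul_add, ← add_assoc,
      factorial_succ, factorial_succ j]
    push_cast
    field_simp
    ring

theorem four_mul_sq_mul_trinomialTerm_succ (m k : ℕ) :
    4 * ((k : ℚ) + 1) ^ 2 * trinomialTerm m (k + 1) =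
      ((m : ℚ) - 2 * k) * (m - 2 * k - 1) * trinomialTerm m k := by
  rcases lt_or_ge m (2 * k + 2) with h | h
  · rw [trinomialTerm_eq_zero (show m < 2 * (k + 1) by omega)]
    rcases (show m < 2 * k ∨ m = 2 * k ∨ m = 2 * k + 1 by omega) with h' | rfl | rfl
    · simp [trinomialTerm_eq_zero h']
    · push_cast; ring
    · push_cast; ring
  · obtain ⟨j, rfl⟩ := Nat.exists_eq_add_of_le h
    rw [show 2 * k + 2 + j = 2 * (k + 1) + j by ring, trinomialTerm_two_mul_add,
      show 2 * (k + 1) + j = 2 * k + (j + 2) by ring, trinomialTerm_two_mul_add,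
      factorial_succ, factorial_succ (j + 1), factorial_succ j]
    push_cast
    field_simp
    ring

def weightedSum (m : ℕ) (w : ℕ → ℚ) : ℚ := ∑ k ∈ range (m + 1), trinomialTerm m k * w k

theorem sum_range_eq_weightedSum {m N : ℕ} (h : m < 2 * N) (w : ℕ → ℚ) :
    ∑ k ∈ range N, trinomialTerm m k * w k = weightedSum m w := by
  have vanish : ∀ k, N ≤ k ∨ m + 1 ≤ k → trinomialTerm m k * w k = 0 := fun k hk => by
    rw [trinomialTerm_eq_zero (by omega), zero_mul]
  rcases le_total N (m + 1) with hle | hle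
  · exact sum_subset (range_subset_range.2 hle) fun k _ hk => vanish k (by simp_all)
  · exact (sum_subset (range_subset_range.2 hle) fun k _ hk => vanish k (by simp_all)).symm

-- `k - 1` truncates at `k = 0`, where the factor `k ^ 2` vanishes anyway.
theorem sq_mul_weightedSum_succ (m : ℕ) (w : ℕ → ℚ) :
    ((m : ℚ) + 1) ^ 2 * weightedSum (m + 1) w =
      (2 * m + 1) * (m + 1) * weightedSum m w +
        4 * weightedSum (m + 1) (fun k => k ^ 2 * (w k - w (k - 1))) := by
  set B : ℕ → ℚ := fun k => 4 * k ^ 2 * trinomialTerm (m + 1) k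
  have hB : ∀ k, ((m : ℚ) + 1) ^ 2 * trinomialTerm (m + 1) k =
      (2 * m + 1) * (m + 1) * trinomialTerm m k + (B k - B (k + 1)) := fun k => by
    have := four_mul_sq_mul_trinomialTerm_succ (m + 1) k
    simp only [B]
    push_cast at this ⊢
    linear_combination (2 * (m : ℚ) + 1) * sub_two_mul_mul_trinomialTerm_succ m k + this
  have hBN : B (m + 1 + 1) = 0 := by
    simp [B, trinomialTerm_eq_zero (by omega : m + 1 < 2 * (m + 1 + 1))]
  calc ((m : ℚ) + 1) ^ 2 * weightedSum (m + 1) w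
      = ∑ k ∈ range (m + 1 + 1), ((2 * m + 1) * (m + 1) * (trinomialTerm m k * w k) +
          (B k - B (k + 1)) * w k) := by
        rw [weightedSum, mul_sum]
        exact sum_congr rfl fun k _ => by rw [← mul_assoc, hB]; ring
    _ = _ := by
        rw [sum_add_distrib, ← mul_sum, sum_range_eq_weightedSum (by omega),
          sum_range_sub_succ_mul_eq_sum_mul_sub_pred B w _ (by simp [B]) hBN]
        simp only [weightedSum, mul_sum]
        congr 1
        exact sum_congr rfl fun k _ => by ring

theorem mul_sub_one_mul_weightedSum (m : ℕ) (w : ℕ → ℚ) :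
    (m : ℚ) * (m - 1) * weightedSum m w =
      2 * (2 * m - 1) * weightedSum m (fun k => k * w k) -
        4 * weightedSum m (fun k => k ^ 2 * (w k - w (k - 1))) := by
  set B : ℕ → ℚ := fun k => 4 * k ^ 2 * trinomialTerm m k
  have hB : ∀ k, (m : ℚ) * (m - 1) * trinomialTerm m k =
      2 * (2 * m - 1) * (k * trinomialTerm m k) - (B k - B (k + 1)) := fun k => by
    simp only [B]
    push_cast
    linear_combination -four_mul_sq_mul_trinomialTerm_succ m k
  have hBN : B (m + 1) = 0 := by simp [B, trinomialTerm_eq_zero (by omega : m < 2 * (m + 1))]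
  calc (m : ℚ) * (m - 1) * weightedSum m w
      = ∑ k ∈ range (m + 1), (2 * (2 * m - 1) * (trinomialTerm m k * (k * w k)) -
          (B k - B (k + 1)) * w k) := by
        rw [weightedSum, mul_sum]
        exact sum_congr rfl fun k _ => by rw [← mul_assoc, hB]; ring
    _ = _ := by
        rw [sum_sub_distrib, ← mul_sum,
          sum_range_sub_succ_mul_eq_sum_mul_sub_pred B w _ (by simp [B]) hBN]
        simp only [weightedSum, mul_sum]
        congr 1
        exact sum_congr rfl fun k _ => by ring

theorem weightedSum_const_mul (m : ℕ) (c : ℚ) (w : ℕ → ℚ) :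
    weightedSum m (fun k => c * w k) = c * weightedSum m w := by
  simp only [weightedSum, mul_sum]
  exact sum_congr rfl fun k _ => by ring

theorem weightedSum_zero (m : ℕ) : weightedSum m (fun _ => 0) = 0 := by
  simp [weightedSum]

theorem H2_succ (k : ℕ) : H2 (k + 1) = H2 k + 1 / ((k : ℚ) + 1) ^ 2 := by
  rw [H2, sum_range_succ, ← H2]

theorem sq_mul_harmonic_sub_pred (k : ℕ) : (k : ℚ) ^ 2 * (harmonic k - harmonic (k - 1)) = k := by
  cases k with
  | zero => simp
  | succ k =>
    rw [Nat.add_sub_cancel, harmonic_succ]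
    push_cast
    field_simp
    ring

theorem sq_mul_harmonic_sq_add_H2_sub_pred (k : ℕ) :
    (k : ℚ) ^ 2 * (harmonic k ^ 2 + H2 k - (harmonic (k - 1) ^ 2 + H2 (k - 1))) =
      2 * (k * harmonic k) := by
  cases k with
  | zero => simp
  | succ k =>
    rw [Nat.add_sub_cancel, harmonic_succ, H2_succ]
    push_cast
    field_simp
    ring

def scaledCentralBinom (m : ℕ) : ℚ := m.centralBinom / 2 ^ m

theorem succ_mul_scaledCentralBinom_succ (m : ℕ) :
    ((m : ℚ) + 1) * scaledCentralBinom (m + 1) = (2 * m + 1) * scaledCentralBinom m := by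
  have := succ_mul_centralBinom_succ m
  rw [← @Nat.cast_inj ℚ] at this
  push_cast at this
  rw [scaledCentralBinom, scaledCentralBinom, pow_succ]
  field_simp
  linear_combination this

theorem weightedSum_one (m : ℕ) : weightedSum m (fun _ => 1) = scaledCentralBinom m := by
  induction m with
  | zero => simp [weightedSum, trinomialTerm, scaledCentralBinom]
  | succ m ih =>
    have h := sq_mul_weightedSum_succ m (fun _ => 1)
    simp only [sub_self, mul_zero, weightedSum_zero, add_zero, ih] at h
    have := succ_mul_scaledCentralBinom_succ m
    apply mul_left_cancel₀ (pow_ne_zero 2 (Nat.cast_add_one_ne_zero m))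
    linear_combination h - ((m : ℚ) + 1) * this

theorem weightedSum_id (m : ℕ) :
    2 * (2 * (m : ℚ) - 1) * weightedSum m (fun k => k) =
      m * (m - 1) * scaledCentralBinom m := by
  have h := mul_sub_one_mul_weightedSum m (fun _ => 1)
  simp only [sub_self, mul_zero, mul_one, weightedSum_zero, sub_zero, weightedSum_one] at h
  exact h.symm

theorem weightedSum_harmonic (m : ℕ) :
    weightedSum m harmonic =
      scaledCentralBinom m * (3 * harmonic m - 2 * harmonic (2 * m)) := by
  induction m with
  | zero => simp [weightedSum, trinomialTerm, scaledCentralBinom]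
  | succ m ih =>
    have h := sq_mul_weightedSum_succ m harmonic
    simp only [sq_mul_harmonic_sub_pred, ih] at h
    have hU := weightedSum_id (m + 1)
    have hc := succ_mul_scaledCentralBinom_succ m
    push_cast at hU
    rw [show 2 * (m + 1) = 2 * m + 1 + 1 by ring, harmonic_succ, harmonic_succ, harmonic_succ]
    push_cast
    have ha : (m : ℚ) + 1 ≠ 0 := by positivity
    have hb : 2 * (m : ℚ) + 1 ≠ 0 := by positivity
    linear_combination (norm := skip) ((2 * m + 1) * h
      - (2 * m + 1) * (m + 1) * (3 * harmonic m - 2 * harmonic (2 * m)) * hc + 2 * hU)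
        / ((m + 1) ^ 2 * (2 * m + 1))
    field_simp
    ring

theorem weightedSum_harmonic_sq_add_H2 (m : ℕ) :
    weightedSum m (fun k => harmonic k ^ 2 + H2 k) =
      scaledCentralBinom m *
        ((3 * harmonic m - 2 * harmonic (2 * m)) ^ 2 + (5 * H2 m - 4 * H2 (2 * m))) := by
  induction m with
  | zero => simp [weightedSum, trinomialTerm, scaledCentralBinom, H2]
  | succ m ih =>
    have h := sq_mul_weightedSum_succ m (fun k => harmonic k ^ 2 + H2 k)
    simp only [sq_mul_harmonic_sq_add_H2_sub_pred, weightedSum_const_mul, ih] at h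
    have hV := mul_sub_one_mul_weightedSum (m + 1) harmonic
    simp only [sq_mul_harmonic_sub_pred] at hV
    have hH := weightedSum_harmonic (m + 1)
    have hU := weightedSum_id (m + 1)
    have hc := succ_mul_scaledCentralBinom_succ m
    push_cast at hV hU
    rw [show 2 * (m + 1) = 2 * m + 1 + 1 by ring, harmonic_succ, harmonic_succ, harmonic_succ]
      at hH ⊢
    rw [H2_succ, H2_succ, H2_succ]
    push_cast at hH ⊢
    have ha : (m : ℚ) + 1 ≠ 0 := by positivity
    have hb : 2 * (m : ℚ) + 1 ≠ 0 := by positivity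
    -- eliminates `S_{m+1}(k H)`, `S_{m+1}(k)`, `S_{m+1}(H)` and `scaledCentralBinom m` from `h`
    linear_combination (norm := skip) ((2 * m + 1) ^ 2 * h
      - (m + 1) * (2 * m + 1) ^ 2 *
        ((3 * harmonic m - 2 * harmonic (2 * m)) ^ 2 + (5 * H2 m - 4 * H2 (2 * m))) * hc
      - 4 * (2 * m + 1) * hV + 4 * (m + 1) * (2 * m + 1) * m * hH + 8 * hU)
        / ((m + 1) ^ 2 * (2 * m + 1) ^ 2)
    field_simp
    ring

end TrinomialHarmonic

/-- For every `n ≥ 0`,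
`∑_{k=0}^n C(2n,k) C(2n-k,k) (H_k² + H_k⁽²⁾) / 4^k
  = (C(4n,2n)/4^n)(5H_{2n}⁽²⁾ - 4H_{4n}⁽²⁾) + (C(4n,2n)/4^n)(3H_{2n} - 2H_{4n})²`. -/
theorem sum_choose_harmonic_sq_div_four_pow (n : ℕ) :
    ∑ k ∈ Finset.range (n + 1),
        ((2 * n).choose k : ℚ) * ((2 * n - k).choose k : ℚ) *
          ((harmonic k) ^ 2 + H2 k) / 4 ^ k =
      ((4 * n).choose (2 * n) : ℚ) / 4 ^ n * (5 * H2 (2 * n) - 4 * H2 (4 * n)) +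
        ((4 * n).choose (2 * n) : ℚ) / 4 ^ n *
          (3 * harmonic (2 * n) - 2 * harmonic (4 * n)) ^ 2 := by
  have h := TrinomialHarmonic.weightedSum_harmonic_sq_add_H2 (2 * n)
  rw [← TrinomialHarmonic.sum_range_eq_weightedSum (by omega : 2 * n < 2 * (n + 1)),
    TrinomialHarmonic.scaledCentralBinom, Nat.centralBinom_eq_two_mul_choose, pow_mul,
    show (2 : ℚ) ^ 2 = 4 by norm_num, show 2 * (2 * n) = 4 * n by ring] at h
  convert h using 1
  · exact Finset.sum_congr rfl fun k _ => by rw [TrinomialHarmonic.trinomialTerm]; ring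
  · ring
end

section
/- For every positive integer n, sum_{k=1}^{n} (-1)^k / (k^2 * C(n,k)) = H_n^{(2)} + 2 * sum_{k=1}^{n} (-1)^k / k^2, as an identity of rational numbers. -/
/-!
Write `S n` for the left-hand side. From `1 / C(n+1,k) = (1 - k/(n+1)) / C(n,k)`,
`S (n+1) = S n - G n / (n+1) + (-1)^(n+1) / (n+1)^2` with `G n = ∑_{k=1}^n (-1)^k / (k C(n,k))`.
Since `k C(n,k) = n C(n-1,k-1)`, `G n` reduces to `∑_{k=0}^m (-1)^k / C(m,k)`, which telescopes
because `1 / C(m,k) = (m+1)/(m+2) (1 / C(m+1,k) + 1 / C(m+1,k+1))`; this gives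
`G n = ((-1)^n - 1) / (n+1)`, so `S (n+1) - S n = (1 - 2 (-1)^n) / (n+1)^2`, which is the increment
of the right-hand side.
-/

open Finset

section InvChoose

variable {K : Type*} [Field K] [CharZero K]

theorem Nat.inv_cast_choose_succ_succ (n k : ℕ) :
    (((n + 1).choose (k + 1) : ℕ) : K)⁻¹ = (k + 1) / (n + 1) * ((n.choose k : ℕ) : K)⁻¹ := by
  have h : ((n + 1 : ℕ) : K) * n.choose k = (n + 1).choose (k + 1) * (k + 1 : ℕ) := by
    exact_mod_cast Nat.add_one_mul_choose_eq n k
  push_cast at h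
  rw [eq_div_of_mul_eq (Nat.cast_add_one_ne_zero k) h.symm, inv_div, div_eq_mul_inv, mul_inv]
  ring

theorem Nat.inv_cast_choose_succ {n k : ℕ} (hk : k ≤ n) :
    (((n + 1).choose k : ℕ) : K)⁻¹ = (n + 1 - k) / (n + 1) * ((n.choose k : ℕ) : K)⁻¹ := by
  have h : (n.choose k : K) * (n + 1 : ℕ) = (n + 1).choose k * (n + 1 - k : ℕ) := by
    exact_mod_cast Nat.choose_mul_succ_eq n k
  have hc : ((n + 1).choose k : K) ≠ 0 := by exact_mod_cast (Nat.choose_pos (by omega)).ne'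
  have hc' : (n.choose k : K) ≠ 0 := by exact_mod_cast (Nat.choose_pos hk).ne'
  rw [Nat.cast_sub (by omega)] at h
  push_cast at h
  field_simp
  linear_combination h

theorem Nat.sum_range_alt_inv_cast_choose (n : ℕ) :
    ∑ k ∈ range (n + 1), (-1 : K) ^ k * ((n.choose k : ℕ) : K)⁻¹ =
      (n + 1) / (n + 2) * (1 + (-1) ^ n) := by
  set f : ℕ → K := fun k ↦ (-1) ^ k * (((n + 1).choose k : ℕ) : K)⁻¹
  have telescope : ∀ k ∈ range (n + 1),
      (-1 : K) ^ k * ((n.choose k : ℕ) : K)⁻¹ = (n + 1) / (n + 2) * (f k - f (k + 1)) := by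
    intro k hk
    simp only [f]
    rw [Nat.inv_cast_choose_succ (Nat.lt_succ_iff.mp (mem_range.mp hk)),
      Nat.inv_cast_choose_succ_succ]
    have : (n + 2 : K) ≠ 0 := by norm_cast
    field_simp
    ring
  rw [sum_congr rfl telescope, ← mul_sum, sum_range_sub']
  simp [f, pow_succ]

theorem Nat.sum_Icc_alt_div_mul_cast_choose (n : ℕ) :
    ∑ k ∈ Icc 1 n, (-1 : K) ^ k / (k * n.choose k) = ((-1) ^ n - 1) / (n + 1) := by
  cases n with
  | zero => simp
  | succ m =>
    have shift : ∑ k ∈ Icc 1 (m + 1), (-1 : K) ^ k / (k * (m + 1).choose k) =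
        ∑ j ∈ range (m + 1), (-1 : K) ^ (j + 1) / ((j + 1 : ℕ) * (m + 1).choose (j + 1)) := by
      rw [range_eq_Ico, sum_Ico_add' (fun k ↦ (-1 : K) ^ k / (k * (m + 1).choose k)), zero_add,
        Ico_add_one_right_eq_Icc]
    rw [shift]
    have term : ∀ j ∈ range (m + 1), (-1 : K) ^ (j + 1) / ((j + 1 : ℕ) * (m + 1).choose (j + 1))
        = -(m + 1 : K)⁻¹ * ((-1) ^ j * ((m.choose j : ℕ) : K)⁻¹) := by
      intro j _
      rw [div_eq_mul_inv, mul_inv, Nat.inv_cast_choose_succ_succ]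
      push_cast
      field_simp
      ring
    rw [sum_congr rfl term, ← mul_sum, Nat.sum_range_alt_inv_cast_choose]
    push_cast
    field_simp
    ring

theorem Nat.sum_Icc_alt_div_sq_mul_cast_choose_succ (n : ℕ) :
    ∑ k ∈ Icc 1 (n + 1), (-1 : K) ^ k / ((k : K) ^ 2 * (n + 1).choose k) =
      ∑ k ∈ Icc 1 n, (-1 : K) ^ k / ((k : K) ^ 2 * n.choose k)
        - (∑ k ∈ Icc 1 n, (-1 : K) ^ k / (k * n.choose k)) / (n + 1)
        + (-1) ^ (n + 1) / (n + 1) ^ 2 := by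
  have term : ∀ k ∈ Icc 1 n, (-1 : K) ^ k / ((k : K) ^ 2 * (n + 1).choose k) =
      (-1) ^ k / ((k : K) ^ 2 * n.choose k) - (-1) ^ k / (k * n.choose k) / (n + 1) := by
    intro k hk
    obtain ⟨hk1, hkn⟩ := mem_Icc.mp hk
    have : (k : K) ≠ 0 := by norm_cast; omega
    rw [div_eq_mul_inv, mul_inv, Nat.inv_cast_choose_succ hkn]
    field_simp
  rw [sum_Icc_succ_top (by omega), sum_congr rfl term, sum_sub_distrib, ← sum_div,
    Nat.choose_self]
  push_cast
  ring

end InvChoose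

theorem H2_succ (n : ℕ) : H2 (n + 1) = H2 n + 1 / ((n : ℚ) + 1) ^ 2 := by
  simp [H2, sum_range_succ]

theorem sum_alt_inv_sq_choose_general (n : ℕ) :
    ∑ k ∈ Finset.Icc 1 n, (-1 : ℚ) ^ k / ((k : ℚ) ^ 2 * (n.choose k : ℚ)) =
      H2 n + 2 * ∑ k ∈ Finset.Icc 1 n, (-1 : ℚ) ^ k / (k : ℚ) ^ 2 := by
  induction n with
  | zero => simp [H2]
  | succ n ih =>
    rw [Nat.sum_Icc_alt_div_sq_mul_cast_choose_succ, Nat.sum_Icc_alt_div_mul_cast_choose, ih,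
      H2_succ, sum_Icc_succ_top (by omega)]
    push_cast
    field_simp
    ring

/-- For every `n ≥ 1`,
`∑_{k=1}^n (-1)^k / (k² C(n,k)) = H_n⁽²⁾ + 2 ∑_{k=1}^n (-1)^k / k²`. -/
theorem sum_alt_inv_sq_choose (n : ℕ) (hn : 0 < n) :
    ∑ k ∈ Finset.Icc 1 n, (-1 : ℚ) ^ k / ((k : ℚ) ^ 2 * (n.choose k : ℚ)) =
      H2 n + 2 * ∑ k ∈ Finset.Icc 1 n, (-1 : ℚ) ^ k / (k : ℚ) ^ 2 :=
  sum_alt_inv_sq_choose_general n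
end

section
/- Let p > 3 be a prime. Then sum_{k=1}^{floor((p-1)/4)} (-1)^k / k^2 ≡ (1/8) * (B_{p-2}({(4-p)/8}) - B_{p-2}({-p/8})) (mod p), where {x} denotes the fractional part of x, B_n(x) denotes the n-th Bernoulli polynomial, and the congruence is between rational numbers whose denominators are coprime to p. -/
/-!
Congruences mod `p` between `p`-integral rationals are expressed through the `p`-adic valuation
`v` on `ℚ`: `x ≡ 0` iff `v x < 1`. Put `m = p - 2`, `n = ⌊(p-1)/4⌋`, `E = ⌊n/2⌋`, `O = n - E`.

By Fermat, `1/k² ≡ k^(p-3)` for `0 < k < p`. Splitting `∑ (-1)^k k^(m-1)` over even and odd `k`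
and summing with `B_m(x + 1) - B_m(x) = m x^(m-1)` gives the exact identity
`m ∑_{k ≤ n} (-1)^k k^(m-1) = 2^(m-1) (B_m(1 + E) - B_m(1/2 + O))`, as `B_m(1) = B_m(1/2) = 0`
for odd `m`; and `8 · 2^(m-1) ≡ -m` because `2^p ≡ 2`. Finally `1 + E` and `1/2 + O` exceed
`{-p/8}` and `{(4-p)/8}` by `p/8 ≡ 0`, and `B_m(x + h) ≡ B_m(x)` whenever `h ≡ 0`, because the
coefficients of `B_m` are `p`-integral by von Staudt–Clausen.
-/

open Finset Polynomial

namespace Valuation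

variable {R Γ₀ : Type*} [CommRing R] [LinearOrderedCommGroupWithZero Γ₀]
  (v : Valuation R Γ₀)

theorem map_eval_sub_eval_le {f : R[X]} (hf : ∀ i, v (f.coeff i) ≤ 1) {x y : R}
    (hx : v x ≤ 1) (hy : v y ≤ 1) : v (f.eval x - f.eval y) ≤ v (x - y) := by
  obtain ⟨g, rfl⟩ : f ∈ lifts v.integer.subtype :=
    (lifts_iff_coeff_lifts f).2 fun i => ⟨⟨_, hf i⟩, rfl⟩
  lift x to v.integer using hx
  lift y to v.integer using hy
  obtain ⟨c, hc⟩ := sub_dvd_eval_sub x y g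
  rw [coe_mapRingHom, eval_map, eval_map, ← Subring.coe_subtype, eval₂_at_apply,
    eval₂_at_apply, ← _root_.map_sub, hc, _root_.map_mul, _root_.map_mul, _root_.map_sub]
  exact mul_le_of_le_one_right' c.2

end Valuation

namespace Polynomial

theorem bernoulli_eval_add_natCast (n N : ℕ) (x : ℚ) :
    (bernoulli n).eval (x + N) =
      (bernoulli n).eval x + n * ∑ j ∈ range N, (x + j) ^ (n - 1) := by
  induction N with
  | zero => simp
  | succ N ih =>
    rw [Nat.cast_succ, ← add_assoc, add_comm _ (1 : ℚ), bernoulli_eval_one_add, ih,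
      sum_range_succ]
    ring

theorem bernoulli_eval_one_of_odd {n : ℕ} (hn : Odd n) (h1 : 1 < n) :
    (bernoulli n).eval 1 = 0 := by
  rw [bernoulli_eval_one, bernoulli'_eq_zero_of_odd hn h1]

theorem bernoulli_eval_one_half_of_odd {n : ℕ} (hn : Odd n) :
    (bernoulli n).eval (1 / 2 : ℚ) = 0 := by
  have h := bernoulli_eval_one_sub n (1 / 2)
  rw [hn.neg_one_pow, show (1 : ℚ) - 1 / 2 = 1 / 2 by norm_num] at h
  linarith

end Polynomial

theorem sum_Icc_neg_one_pow_mul {R : Type*} [Ring R] (f : ℕ → R) (n : ℕ) :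
    ∑ k ∈ Icc 1 n, (-1) ^ k * f k =
      ∑ j ∈ range (n / 2), f (2 * j + 2) - ∑ j ∈ range (n - n / 2), f (2 * j + 1) := by
  induction n with
  | zero => simp
  | succ n ih =>
    rw [sum_Icc_succ_top (by omega), ih]
    obtain ⟨t, rfl | rfl⟩ := n.even_or_odd'
    · rw [show (2 * t + 1) / 2 = 2 * t / 2 by omega,
        show 2 * t + 1 - 2 * t / 2 = 2 * t - 2 * t / 2 + 1 by omega, sum_range_succ,
        show 2 * (2 * t - 2 * t / 2) + 1 = 2 * t + 1 by omega, Odd.neg_one_pow ⟨t, rfl⟩,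
        neg_one_mul]
      abel
    · rw [show (2 * t + 1 + 1) / 2 = (2 * t + 1) / 2 + 1 by omega,
        show 2 * t + 1 + 1 - ((2 * t + 1) / 2 + 1) = 2 * t + 1 - (2 * t + 1) / 2 by omega,
        sum_range_succ, show 2 * ((2 * t + 1) / 2) + 2 = 2 * t + 1 + 1 by omega,
        Even.neg_one_pow ⟨t + 1, by omega⟩, one_mul]
      abel

theorem mul_sum_Icc_neg_one_pow_mul_pow {m : ℕ} (hm : Odd m) (hm1 : 1 < m) (n : ℕ) :
    m * ∑ k ∈ Icc 1 n, (-1 : ℚ) ^ k * (k : ℚ) ^ (m - 1) =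
      2 ^ (m - 1) * ((Polynomial.bernoulli m).eval ((1 : ℚ) + (n / 2 : ℕ)) -
        (Polynomial.bernoulli m).eval ((1 / 2 : ℚ) + (n - n / 2 : ℕ))) := by
  rw [sum_Icc_neg_one_pow_mul, bernoulli_eval_add_natCast, bernoulli_eval_add_natCast,
    bernoulli_eval_one_of_odd hm hm1, bernoulli_eval_one_half_of_odd hm]
  have h2 (j : ℕ) : ((2 * j + 2 : ℕ) : ℚ) = 2 * (1 + j) := by push_cast; ring
  have h1 (j : ℕ) : ((2 * j + 1 : ℕ) : ℚ) = 2 * (1 / 2 + j) := by push_cast; ring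
  simp only [h1, h2, mul_pow, ← mul_sum]
  ring

theorem fract_neg_div_eight {N : ℕ} (hN : 0 < N) :
    Int.fract (-(N : ℚ) / 8) = 1 + ((N - 1) / 4 / 2 : ℕ) - N / 8 := by
  generalize hE : (N - 1) / 4 / 2 = E
  have h1 : N ≤ 8 + 8 * E := by omega
  have h2 : 8 * E < N := by omega
  qify at h1 h2
  rw [Int.fract_eq_iff]
  exact ⟨by linarith, by linarith, -(1 + E : ℕ), by push_cast; ring⟩

theorem fract_four_sub_div_eight {N : ℕ} (hN : 0 < N) :
    Int.fract ((4 - N : ℚ) / 8) = 1 / 2 + ((N - 1) / 4 - (N - 1) / 4 / 2 : ℕ) - N / 8 := by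
  generalize hO : (N - 1) / 4 - (N - 1) / 4 / 2 = O
  have h1 : N ≤ 4 + 8 * O := by omega
  have h2 : 4 + 8 * O < N + 8 := by omega
  qify at h1 h2
  rw [Int.fract_eq_iff]
  exact ⟨by linarith, by linarith, -(O : ℕ), by push_cast; ring⟩

namespace Rat

variable {p : ℕ} [Fact p.Prime]

theorem padicValuation_natCast_le_one (k : ℕ) : padicValuation p k ≤ 1 := by
  exact_mod_cast Int.padicValuation_le_one p k

theorem padicValuation_natCast_lt_one_iff {k : ℕ} : padicValuation p k < 1 ↔ p ∣ k := by
  rw [← Int.cast_natCast, padicValuation_cast, Int.padicValuation_lt_one_iff,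
    Int.natCast_dvd_natCast]

theorem padicValuation_natCast_eq_one {k : ℕ} (hk : ¬ p ∣ k) : padicValuation p k = 1 :=
  (padicValuation_natCast_le_one k).antisymm
    (not_lt.1 (mt padicValuation_natCast_lt_one_iff.1 hk))

theorem padicValuation_two (hp : p ≠ 2) : padicValuation p 2 = 1 := by
  exact_mod_cast padicValuation_natCast_eq_one (p := p) (k := 2)
    fun h => hp ((Nat.prime_dvd_prime_iff_eq Fact.out Nat.prime_two).1 h)

theorem dvd_num_of_padicValuation_lt_one {x : ℚ} (h : padicValuation p x < 1) :
    (p : ℤ) ∣ x.num := by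
  rw [← Int.padicValuation_lt_one_iff, ← padicValuation_cast, ← x.mul_den_eq_num, map_mul]
  exact mul_lt_of_lt_of_le_one h (padicValuation_natCast_le_one _)

theorem padicValuation_one_div_pow_sub_pow_lt_one {k : ℕ} (hk : ¬ p ∣ k) {i j : ℕ}
    (hij : i + j = p - 1) : padicValuation p (1 / (k : ℚ) ^ j - (k : ℚ) ^ i) < 1 := by
  have hk0 : (k : ℚ) ≠ 0 := by rintro h; exact hk (by simp [Nat.cast_eq_zero.1 h])
  have hfermat : (k : ℤ) ^ (p - 1) ≡ 1 [ZMOD p] :=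
    Int.ModEq.pow_card_sub_one_eq_one Fact.out
      (Nat.isCoprime_iff_coprime.2 ((Nat.Prime.coprime_iff_not_dvd Fact.out).2 hk).symm)
  have h : 1 / (k : ℚ) ^ j - (k : ℚ) ^ i =
      ((1 - (k : ℤ) ^ (p - 1) : ℤ) : ℚ) / (k : ℚ) ^ j := by
    rw [← hij, pow_add]
    field_simp
    push_cast
    ring
  rw [h, map_div₀, map_pow, padicValuation_natCast_eq_one hk, one_pow, div_one,
    padicValuation_cast, Int.padicValuation_lt_one_iff]
  exact hfermat.dvd

theorem padicValuation_sum_neg_one_pow_div_pow_sub_lt_one {n : ℕ} (hn : n < p) {i j : ℕ}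
    (hij : i + j = p - 1) :
    padicValuation p (∑ k ∈ Icc 1 n, (-1 : ℚ) ^ k / (k : ℚ) ^ j -
      ∑ k ∈ Icc 1 n, (-1 : ℚ) ^ k * (k : ℚ) ^ i) < 1 := by
  rw [← sum_sub_distrib]
  refine (padicValuation p).map_sum_lt one_ne_zero fun k hk => ?_
  have hk := mem_Icc.1 hk
  rw [div_eq_mul_one_div, ← mul_sub, map_mul, map_pow, Valuation.map_neg, map_one, one_pow,
    one_mul]
  exact padicValuation_one_div_pow_sub_pow_lt_one
    (Nat.not_dvd_of_pos_of_lt (by omega) (by omega)) hij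

theorem padicValuation_two_pow_mul_eight_add_lt_one (hp : 3 ≤ p) :
    padicValuation p (2 ^ (p - 3) * 8 + (p - 2 : ℕ)) < 1 := by
  have h : (p : ℤ) ∣ 2 ^ p + p - 2 := by
    rw [← ZMod.intCast_zmod_eq_zero_iff_dvd]
    push_cast
    rw [ZMod.pow_card, ZMod.natCast_self]
    ring
  have h8 : (2 : ℚ) ^ (p - 3) * 8 = 2 ^ p := by
    rw [show (8 : ℚ) = 2 ^ 3 by norm_num, ← pow_add, Nat.sub_add_cancel hp]
  rw [h8, Nat.cast_sub (by omega), Nat.cast_ofNat,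
    show (2 : ℚ) ^ p + (p - 2) = ((2 ^ p + p - 2 : ℤ) : ℚ) by push_cast; ring,
    padicValuation_cast, Int.padicValuation_lt_one_iff]
  exact h

theorem padicValuation_bernoulli_le_one {n : ℕ} (hn : n + 1 < p) :
    padicValuation p (_root_.bernoulli n) ≤ 1 := by
  obtain ⟨k, rfl | rfl⟩ := n.even_or_odd'
  · obtain ⟨z, hz⟩ := Bernoulli.vonStaudt_clausen k
    rw [eq_sub_of_add_eq hz.symm]
    refine (padicValuation p).map_sub_le (Int.padicValuation_le_one p z)
      ((padicValuation p).map_sum_le fun q hq => ?_)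
    simp only [mem_filter, mem_range] at hq
    rw [one_div, map_inv₀, padicValuation_natCast_eq_one
      (Nat.not_dvd_of_pos_of_lt hq.2.1.pos (by omega)), inv_one]
  · rcases k.eq_zero_or_pos with rfl | hk
    · rw [_root_.bernoulli_one, neg_div, Valuation.map_neg, one_div, map_inv₀,
        padicValuation_two (by omega), inv_one]
    · rw [bernoulli_eq_zero_of_odd (odd_two_mul_add_one k) (by omega), map_zero]
      exact zero_le

theorem padicValuation_coeff_bernoulli_le_one {n : ℕ} (hn : n + 1 < p) (i : ℕ) :
    padicValuation p ((Polynomial.bernoulli n).coeff i) ≤ 1 := by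
  rw [coeff_bernoulli]
  split_ifs
  · rw [map_mul]
    exact mul_le_one' (padicValuation_bernoulli_le_one (by omega))
      (padicValuation_natCast_le_one _)
  · rw [map_zero]
    exact zero_le

theorem padicValuation_bernoulli_eval_sub_eval_le {n : ℕ} (hn : n + 1 < p) {x y : ℚ}
    (hx : padicValuation p x ≤ 1) (hy : padicValuation p y ≤ 1) :
    padicValuation p ((Polynomial.bernoulli n).eval x - (Polynomial.bernoulli n).eval y) ≤
      padicValuation p (x - y) :=
  (padicValuation p).map_eval_sub_eval_le (padicValuation_coeff_bernoulli_le_one hn) hx hy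

theorem padicValuation_bernoulli_eval_sub_eval_sub_lt_one {n : ℕ} (hn : n + 1 < p) {x h : ℚ}
    (hx : padicValuation p x ≤ 1) (hh : padicValuation p h < 1) :
    padicValuation p
      ((Polynomial.bernoulli n).eval x - (Polynomial.bernoulli n).eval (x - h)) < 1 :=
  (padicValuation_bernoulli_eval_sub_eval_le hn hx
    ((padicValuation p).map_sub_le hx hh.le)).trans_lt (by rwa [sub_sub_cancel])

theorem padicValuation_sum_neg_one_pow_mul_pow_sub_bernoulli_lt_one (hp3 : 3 < p) (n : ℕ) :
    padicValuation p (∑ k ∈ Icc 1 n, (-1 : ℚ) ^ k * (k : ℚ) ^ (p - 3) -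
      1 / 8 * ((Polynomial.bernoulli (p - 2)).eval ((1 / 2 : ℚ) + (n - n / 2 : ℕ)) -
        (Polynomial.bernoulli (p - 2)).eval ((1 : ℚ) + (n / 2 : ℕ)))) < 1 := by
  have hodd : Odd (p - 2) :=
    Nat.Odd.sub_even (by omega) ((Fact.out : p.Prime).odd_of_ne_two (by omega)) even_two
  have hT := mul_sum_Icc_neg_one_pow_mul_pow hodd (by omega) n
  rw [show p - 2 - 1 = p - 3 by omega] at hT
  set v := padicValuation p
  set B := Polynomial.bernoulli (p - 2)
  set a : ℚ := 1 + (n / 2 : ℕ)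
  set b : ℚ := 1 / 2 + (n - n / 2 : ℕ)
  set T := ∑ k ∈ Icc 1 n, (-1 : ℚ) ^ k * (k : ℚ) ^ (p - 3)
  have h2 : v 2 = 1 := padicValuation_two (by omega)
  have h8 : v 8 = 1 := by rw [show (8 : ℚ) = 2 ^ 3 by norm_num, map_pow, h2, one_pow]
  have ha : v a ≤ 1 := add_mem (one_mem v.integer) (natCast_mem v.integer _)
  have hb : v b ≤ 1 := add_mem (show v (1 / 2) ≤ 1 by rw [one_div, map_inv₀, h2, inv_one])
    (natCast_mem v.integer _)
  have hab : v (B.eval a - B.eval b) ≤ 1 :=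
    (padicValuation_bernoulli_eval_sub_eval_le (by omega) ha hb).trans (v.map_sub_le ha hb)
  have hkey : v (8 * (p - 2 : ℕ)) * v (T - 1 / 8 * (B.eval b - B.eval a)) =
      v (2 ^ (p - 3) * 8 + (p - 2 : ℕ)) * v (B.eval a - B.eval b) := by
    rw [← map_mul, ← map_mul]
    congr 1
    linear_combination 8 * hT
  rw [map_mul, h8, one_mul, padicValuation_natCast_eq_one
    (Nat.not_dvd_of_pos_of_lt (by omega) (by omega)), one_mul] at hkey
  rw [hkey]
  exact mul_lt_of_lt_of_le_one (padicValuation_two_pow_mul_eight_add_lt_one hp3.le) hab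

end Rat

/-- For any prime `p > 3`,
`∑_{k=1}^{⌊(p-1)/4⌋} (-1)^k / k² ≡ (1/8)(B_{p-2}({(4-p)/8}) - B_{p-2}({-p/8})) (mod p)`,
where `{x}` is the fractional part and `B_n` the `n`-th Bernoulli polynomial. -/
theorem sum_alt_inv_sq_congr_bernoulli (p : ℕ) (hp : p.Prime) (hp3 : 3 < p) :
    ((p : ℤ)) ∣
      ((∑ k ∈ Finset.Icc 1 ((p - 1) / 4), (-1 : ℚ) ^ k / (k : ℚ) ^ 2) -
        1 / 8 * ((Polynomial.bernoulli (p - 2)).eval (Int.fract ((4 - (p : ℚ)) / 8)) -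
          (Polynomial.bernoulli (p - 2)).eval (Int.fract (-(p : ℚ) / 8)))).num := by
  have := Fact.mk hp
  set v := Rat.padicValuation p
  have h2 : v 2 = 1 := Rat.padicValuation_two (by omega)
  have h8 : v 8 = 1 := by rw [show (8 : ℚ) = 2 ^ 3 by norm_num, map_pow, h2, one_pow]
  have hp8 : v (p / 8) < 1 := by
    rw [map_div₀, h8, div_one]
    exact Rat.padicValuation_natCast_lt_one_iff.2 dvd_rfl
  have hS := Rat.padicValuation_sum_neg_one_pow_div_pow_sub_lt_one (p := p)
    (n := (p - 1) / 4) (by omega) (i := p - 3) (j := 2) (by omega)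
  have hT := Rat.padicValuation_sum_neg_one_pow_mul_pow_sub_bernoulli_lt_one hp3 ((p - 1) / 4)
  have ha := Rat.padicValuation_bernoulli_eval_sub_eval_sub_lt_one (n := p - 2) (by omega)
    (add_mem (one_mem v.integer) (natCast_mem v.integer ((p - 1) / 4 / 2))) hp8
  have hb := Rat.padicValuation_bernoulli_eval_sub_eval_sub_lt_one (n := p - 2) (by omega)
    (add_mem (show v (1 / 2) ≤ 1 by rw [one_div, map_inv₀, h2, inv_one])
      (natCast_mem v.integer ((p - 1) / 4 - (p - 1) / 4 / 2))) hp8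
  have hshifts := (map_mul v (1 / 8) _).trans_lt (mul_lt_of_le_one_of_lt
    (show v (1 / 8) ≤ 1 by rw [one_div, map_inv₀, h8, inv_one]) (v.map_sub_lt hb ha))
  apply Rat.dvd_num_of_padicValuation_lt_one
  rw [fract_four_sub_div_eight hp.pos, fract_neg_div_eight hp.pos]
  convert v.map_add_lt (v.map_add_lt hS hT) hshifts using 2
  ring
end
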